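/- arXiv:1005.2008 — 4 statements merged into one kernel-verified Lean document; each statement's English description precedes it below -/
import Mathlib

section
/- Let f be a nonzero element of the formal power series ring O[[x_1,…,x_n]] over a complete discrete valuation ring O with maximal ideal p. Then there exist a_1,…,a_n ∈ p such that f(a_1,…,a_n) ≠ 0. -/
namespace Stmt3Aux

open MvPowerSeries

variable {n : ℕ} {O : Type*} [CommRing O]

/-- total degree of a multi-index -/
def deg (d : Fin n →₀ ℕ) : ℕ := ∑ i, d i

lemma deg_add (d e : Fin n →₀ ℕ) : deg (d + e) = deg d + deg e := by
  simp [deg, Finset.sum_add_distrib]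

lemma apply_le_deg (d : Fin n →₀ ℕ) (i : Fin n) : d i ≤ deg d :=
  Finset.single_le_sum (fun _ _ => Nat.zero_le _) (Finset.mem_univ i)

lemma deg_eq_zero {d : Fin n →₀ ℕ} (h : deg d = 0) : d = 0 := by
  ext i
  have := apply_le_deg d i
  simp only [Finsupp.coe_zero, Pi.zero_apply]
  omega

/-- The ideal of power series whose coefficients in total degree `< k` all vanish. -/
def lowZero (n : ℕ) (O : Type*) [CommRing O] (k : ℕ) : Ideal (MvPowerSeries (Fin n) O) where
  carrier := {f | ∀ d, deg d < k → MvPowerSeries.coeff d f = 0}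
  add_mem' := by
    intro f g hf hg d hd
    simp [map_add, hf d hd, hg d hd]
  zero_mem' := by intro d hd; simp
  smul_mem' := by
    intro r f hf d hd
    rw [smul_eq_mul, MvPowerSeries.coeff_mul]
    apply Finset.sum_eq_zero
    intro p hp
    rw [Finset.HasAntidiagonal.mem_antidiagonal] at hp
    have h2 : deg p.2 < k := by
      have : deg p.1 + deg p.2 = deg d := by rw [← deg_add, hp]
      omega
    rw [hf p.2 h2, mul_zero]

lemma span_X_le_lowZero :
    Ideal.span (Set.range (X : Fin n → MvPowerSeries (Fin n) O)) ≤ lowZero n O 1 := by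
  rw [Ideal.span_le]
  rintro _ ⟨i, rfl⟩ d hd
  have hd0 : d = 0 := deg_eq_zero (by omega)
  subst hd0
  simp [MvPowerSeries.coeff_zero_eq_constantCoeff]

lemma pow_span_X_le_lowZero (k : ℕ) :
    (Ideal.span (Set.range (X : Fin n → MvPowerSeries (Fin n) O))) ^ k ≤ lowZero n O k := by
  induction k with
  | zero => intro f _ d hd; omega
  | succ k ih =>
    rw [pow_succ]
    rw [Ideal.mul_le]
    intro r hr s hs d hd
    have hr' := ih hr
    have hs' := span_X_le_lowZero hs
    rw [MvPowerSeries.coeff_mul]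
    apply Finset.sum_eq_zero
    intro p hp
    rw [Finset.HasAntidiagonal.mem_antidiagonal] at hp
    have hdeg : deg p.1 + deg p.2 = deg d := by rw [← deg_add, hp]
    by_cases h2 : deg p.2 < 1
    · rw [hs' p.2 h2, mul_zero]
    · have h1 : deg p.1 < k := by omega
      rw [hr' p.1 h1, zero_mul]


lemma prod_pow_mem (p : Ideal O) (a : Fin n → O) (ha : ∀ i, a i ∈ p)
    (d : Fin n →₀ ℕ) (s : Finset (Fin n)) :
    (∏ i ∈ s, a i ^ d i) ∈ p ^ (∑ i ∈ s, d i) := by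
  classical
  induction s using Finset.induction with
  | empty => simp [Ideal.one_eq_top]
  | @insert j t hj ih =>
    rw [Finset.prod_insert hj, Finset.sum_insert hj, pow_add]
    exact Ideal.mul_mem_mul (Ideal.pow_mem_pow (ha j) _) ih

lemma eval_mem (p : Ideal O) (a : Fin n → O) (ha : ∀ i, a i ∈ p) (k : ℕ)
    (h : MvPolynomial (Fin n) O) (hh : ∀ d ∈ h.support, k ≤ deg d) :
    MvPolynomial.eval a h ∈ p ^ k := by
  classical
  rw [MvPolynomial.eval_eq]
  apply Ideal.sum_mem
  intro d hd
  apply Ideal.mul_mem_left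
  have h1 : (∏ i ∈ d.support, a i ^ d i) ∈ p ^ (∑ i ∈ d.support, d i) :=
    prod_pow_mem p a ha d d.support
  have h2 : (∑ i ∈ d.support, d i) = deg d :=
    Finset.sum_subset (Finset.subset_univ _)
      (fun i _ hi => Finsupp.notMem_support_iff.mp hi)
  rw [h2] at h1
  exact Ideal.pow_le_pow_right (hh d hd) h1

lemma base_inj : ∀ (m B : ℕ) (x y : Fin m → ℕ), (∀ i, x i < B) → (∀ i, y i < B) →
    (∑ i, x i * B ^ (i : ℕ)) = (∑ i, y i * B ^ (i : ℕ)) → x = y := by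
  intro m
  induction m with
  | zero => intro B x y _ _ _; funext i; exact absurd i.2 (by omega)
  | succ m ih =>
    intro B x y hx hy hsum
    have hB : 0 < B := lt_of_le_of_lt (Nat.zero_le _) (hx 0)
    have expand : ∀ z : Fin (m+1) → ℕ,
        (∑ i, z i * B ^ (i : ℕ)) = z 0 + (∑ i : Fin m, z i.succ * B ^ (i : ℕ)) * B := by
      intro z
      rw [Fin.sum_univ_succ, Finset.sum_mul]
      congr 1
      · simp
      · apply Finset.sum_congr rfl
        intro i _
        rw [Fin.val_succ, pow_succ]
        ring
    rw [expand x, expand y] at hsum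
    have h0 : x 0 = y 0 := by
      have := congrArg (· % B) hsum
      simpa [Nat.add_mul_mod_self_right, Nat.mod_eq_of_lt (hx 0), Nat.mod_eq_of_lt (hy 0)]
        using this
    have htail : (∑ i : Fin m, x i.succ * B ^ (i : ℕ)) = ∑ i : Fin m, y i.succ * B ^ (i : ℕ) :=
      Nat.eq_of_mul_eq_mul_right hB (by omega)
    have := ih B (fun i => x i.succ) (fun i => y i.succ) (fun i => hx _) (fun i => hy _) htail
    funext i
    rcases Fin.eq_zero_or_eq_succ i with rfl | ⟨j, rfl⟩
    · exact h0
    · exact congrFun this j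

lemma exists_val [IsDomain O] [IsDiscreteValuationRing O]
    [IsHausdorff (IsLocalRing.maximalIdeal O) O]
    {π : O} (hπ : Irreducible π) (x : O) (hx : x ≠ 0) :
    ∃ m y, x = π ^ m * y ∧ ¬ π ∣ y := by
  have hsmul : ∀ j : ℕ, ((IsLocalRing.maximalIdeal O ^ j • ⊤ : Submodule O O) : Set O)
      = (IsLocalRing.maximalIdeal O ^ j : Ideal O) := by
    intro j
    rw [smul_eq_mul, Ideal.mul_top]
  have hmem : ∀ (j : ℕ) (z : O), z ∈ IsLocalRing.maximalIdeal O ^ j ↔ π ^ j ∣ z := by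
    intro j z
    rw [hπ.maximalIdeal_eq, Ideal.span_singleton_pow, Ideal.mem_span_singleton]
  have hex : ∃ j, ¬ π ^ j ∣ x := by
    by_contra hall
    push_neg at hall
    apply hx
    apply IsHausdorff.haus (inferInstance : IsHausdorff (IsLocalRing.maximalIdeal O) O)
    intro j
    rw [SModEq.zero]
    show x ∈ (IsLocalRing.maximalIdeal O ^ j • ⊤ : Submodule O O)
    rw [show (IsLocalRing.maximalIdeal O ^ j • ⊤ : Submodule O O)
        = (IsLocalRing.maximalIdeal O ^ j : Ideal O) from by rw [smul_eq_mul, Ideal.mul_top]]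
    exact (hmem j x).mpr (hall j)
  classical
  obtain ⟨N, hNspec, hNmin⟩ : ∃ N : ℕ, (¬ π ^ N ∣ x) ∧ ∀ m < N, π ^ m ∣ x :=
    ⟨Nat.find hex, Nat.find_spec hex, fun m hm => by
      by_contra hc; exact absurd (Nat.find_min hex hm) (by simpa using hc)⟩
  have hN1 : 1 ≤ N := by
    rcases Nat.eq_zero_or_pos N with h0 | h1
    · exfalso; rw [h0] at hNspec; simp at hNspec
    · exact h1
  have hdvd : π ^ (N - 1) ∣ x := hNmin _ (by omega)
  obtain ⟨y, hy⟩ := hdvd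
  refine ⟨N - 1, y, hy, ?_⟩
  rintro ⟨z, rfl⟩
  apply hNspec
  rw [hy]
  exact ⟨z, by rw [← mul_assoc, ← pow_succ]; congr 2; omega⟩

end Stmt3Aux


set_option maxHeartbeats 1000000 in
/-- Let `f` be a nonzero element of the formal power series ring
`O[[x₁,…,x_n]]` over a complete discrete valuation ring `O` with maximal ideal `p`.  Then
there exist `a₁,…,a_n ∈ p` such that `f(a₁,…,a_n) ≠ 0`.  Here the value `b = f(a₁,…,a_n)`
(which makes sense since the `aᵢ` are topologically nilpotent and `O` is complete) is
characterised by the approximation property: for every `k` and every polynomial truncation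
`g` of `f` with `f - g ∈ (x₁,…,x_n)^k`, one has `b - g(a₁,…,a_n) ∈ p^k`. -/
theorem stmt3 {O : Type*} [CommRing O] [IsDomain O] [IsDiscreteValuationRing O]
    [IsAdicComplete (IsLocalRing.maximalIdeal O) O]
    (n : ℕ) (f : MvPowerSeries (Fin n) O) (hf : f ≠ 0) :
    ∃ a : Fin n → O, (∀ i, a i ∈ IsLocalRing.maximalIdeal O) ∧
      ∃ b : O, b ≠ 0 ∧
        ∀ k : ℕ, ∀ g : MvPolynomial (Fin n) O,
          f - (g : MvPowerSeries (Fin n) O) ∈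
            (Ideal.span (Set.range (MvPowerSeries.X : Fin n → MvPowerSeries (Fin n) O))) ^ k →
          b - MvPolynomial.eval a g ∈ (IsLocalRing.maximalIdeal O) ^ k := by
  classical
  obtain ⟨π, hπ⟩ := IsDiscreteValuationRing.exists_irreducible O
  have hπ0 : π ≠ 0 := hπ.ne_zero
  have hmem : ∀ (k : ℕ) (x : O), x ∈ (IsLocalRing.maximalIdeal O) ^ k ↔ π ^ k ∣ x := by
    intro k x
    rw [hπ.maximalIdeal_eq, Ideal.span_singleton_pow, Ideal.mem_span_singleton]
  have hπp : π ∈ IsLocalRing.maximalIdeal O := by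
    rw [hπ.maximalIdeal_eq]; exact Ideal.mem_span_singleton_self π
  have hsmul : ∀ m : ℕ, ((IsLocalRing.maximalIdeal O) ^ m • ⊤ : Submodule O O)
      = ((IsLocalRing.maximalIdeal O) ^ m : Ideal O) := by
    intro m; rw [smul_eq_mul, Ideal.mul_top]
  -- valuation functions
  have hval : ∀ x : O, ∃ (m : ℕ) (y : O), x ≠ 0 → (x = π ^ m * y ∧ ¬ π ∣ y) := by
    intro x
    by_cases hx : x = 0
    · exact ⟨0, 0, fun h => absurd hx h⟩
    · obtain ⟨m, y, h1, h2⟩ := Stmt3Aux.exists_val hπ x hx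
      exact ⟨m, y, fun _ => ⟨h1, h2⟩⟩
  choose V Y hVY using hval
  -- a coefficient with nonzero value
  obtain ⟨dstar, hdstar⟩ : ∃ d : Fin n →₀ ℕ, MvPowerSeries.coeff d f ≠ 0 := by
    by_contra h; push_neg at h
    exact hf (MvPowerSeries.ext fun d => by rw [h d, map_zero])
  set c : (Fin n →₀ ℕ) → O := fun d => MvPowerSeries.coeff d f with hc
  set D : ℕ := Stmt3Aux.deg dstar + 1 with hD
  set F : Finset (Fin n →₀ ℕ) :=
    (Finset.Iic (Finsupp.equivFunOnFinite.symm fun _ => D)).filter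
      (fun d => Stmt3Aux.deg d ≤ D ∧ c d ≠ 0) with hF
  have memF : ∀ d : Fin n →₀ ℕ, c d ≠ 0 → Stmt3Aux.deg d ≤ D → d ∈ F := by
    intro d h1 h2
    rw [hF, Finset.mem_filter, Finset.mem_Iic]
    refine ⟨?_, h2, h1⟩
    rw [Finsupp.le_def]
    intro i
    simp only [Finsupp.equivFunOnFinite_symm_apply_apply]
    exact le_trans (Stmt3Aux.apply_le_deg d i) h2
  have hdstarF : dstar ∈ F := memF dstar hdstar (by omega)
  set VF : ℕ := F.sup fun d => V (c d) with hVF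
  set B : ℕ := VF + D + 1 with hB
  set R : ℕ := VF + D * B ^ (n + 1) + B ^ (n + 1) + 1 with hR
  set w : Fin n → ℕ := fun i => R + B ^ ((i : ℕ) + 1) with hw
  set a : Fin n → O := fun i => π ^ w i with ha
  have haP : ∀ i, a i ∈ IsLocalRing.maximalIdeal O := by
    intro i
    have h1 : π ^ w i ∈ (IsLocalRing.maximalIdeal O) ^ w i := Ideal.pow_mem_pow hπp _
    have h2 : (IsLocalRing.maximalIdeal O) ^ w i ≤ (IsLocalRing.maximalIdeal O) ^ 1 :=
      Ideal.pow_le_pow_right (by simp [hw]; omega)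
    rw [pow_one] at h2
    exact h2 h1
  set wsum : (Fin n →₀ ℕ) → ℕ := fun d => ∑ i, d i * w i with hwsum
  set psi : (Fin n →₀ ℕ) → ℕ := fun d => ∑ i, d i * B ^ (i : ℕ) with hpsi
  have hdecomp : ∀ d, wsum d = R * Stmt3Aux.deg d + B * psi d := by
    intro d
    rw [hwsum, hpsi, Stmt3Aux.deg, Finset.mul_sum, Finset.mul_sum, ← Finset.sum_add_distrib]
    apply Finset.sum_congr rfl
    intro i _
    simp only [hw]
    rw [pow_succ]
    ring
  have hwge : ∀ d, Stmt3Aux.deg d ≤ wsum d := by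
    intro d
    rw [Stmt3Aux.deg, hwsum]
    apply Finset.sum_le_sum
    intro i _
    have : 1 ≤ w i := by simp [hw]; omega
    exact Nat.le_mul_of_pos_right _ (by omega)
  set φ : (Fin n →₀ ℕ) → ℕ := fun d => V (c d) + wsum d with hφ
  obtain ⟨d0, hd0F, hd0min⟩ := F.exists_min_image φ ⟨dstar, hdstarF⟩
  have hd0c : c d0 ≠ 0 := ((Finset.mem_filter.mp hd0F).2).2
  have hd0D : Stmt3Aux.deg d0 ≤ D := ((Finset.mem_filter.mp hd0F).2).1
  set u : ℕ := φ d0 with hu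
  have hVFle : ∀ d ∈ F, V (c d) ≤ VF := fun d hd =>
    Finset.le_sup (f := fun d => V (c d)) hd
  have hB1 : 1 ≤ B := by omega
  have hpsile : ∀ d, psi d ≤ Stmt3Aux.deg d * B ^ n := by
    intro d
    rw [hpsi, Stmt3Aux.deg, Finset.sum_mul]
    apply Finset.sum_le_sum
    intro i _
    exact Nat.mul_le_mul_left _ (Nat.pow_le_pow_right hB1 (by omega))
  have hBpsi : ∀ d, Stmt3Aux.deg d ≤ D → B * psi d ≤ D * B ^ (n + 1) := by
    intro d hd
    calc B * psi d ≤ B * (Stmt3Aux.deg d * B ^ n) := Nat.mul_le_mul_left _ (hpsile d)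
      _ ≤ B * (D * B ^ n) := Nat.mul_le_mul_left _ (Nat.mul_le_mul_right _ hd)
      _ = D * B ^ (n + 1) := by rw [pow_succ]; ring
  have hubound : u < R * D + R := by
    have h2 : V (c d0) ≤ VF := hVFle d0 hd0F
    have h3 : wsum d0 = R * Stmt3Aux.deg d0 + B * psi d0 := hdecomp d0
    have h5 : B * psi d0 ≤ D * B ^ (n + 1) := hBpsi d0 hd0D
    have h6 : R * Stmt3Aux.deg d0 ≤ R * D := Nat.mul_le_mul_left _ hd0D
    have h7 : u = V (c d0) + wsum d0 := rfl
    omega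
  have key : ∀ d, c d ≠ 0 → d ≠ d0 → u < φ d := by
    intro d hcd hne
    by_cases hdD : Stmt3Aux.deg d ≤ D
    · have hdF : d ∈ F := memF d hcd hdD
      have hle : φ d0 ≤ φ d := hd0min d hdF
      rcases lt_or_eq_of_le hle with h | h
      · exact h
      exfalso
      apply hne
      have e1 : V (c d) + (R * Stmt3Aux.deg d + B * psi d)
          = V (c d0) + (R * Stmt3Aux.deg d0 + B * psi d0) := by
        rw [← hdecomp, ← hdecomp]
        exact h.symm
      have hVd : V (c d) ≤ VF := hVFle d hdF
      have hVd0 : V (c d0) ≤ VF := hVFle d0 hd0F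
      have hBd : B * psi d ≤ D * B ^ (n + 1) := hBpsi d hdD
      have hBd0 : B * psi d0 ≤ D * B ^ (n + 1) := hBpsi d0 hd0D
      have hdeg : Stmt3Aux.deg d = Stmt3Aux.deg d0 := by
        rcases Nat.lt_trichotomy (Stmt3Aux.deg d) (Stmt3Aux.deg d0) with hlt | he | hgt
        · exfalso
          have hm : R * (Stmt3Aux.deg d + 1) ≤ R * Stmt3Aux.deg d0 :=
            Nat.mul_le_mul_left _ (by omega)
          have hexp : R * (Stmt3Aux.deg d + 1) = R * Stmt3Aux.deg d + R := by ring
          omega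
        · exact he
        · exfalso
          have hm : R * (Stmt3Aux.deg d0 + 1) ≤ R * Stmt3Aux.deg d :=
            Nat.mul_le_mul_left _ (by omega)
          have hexp : R * (Stmt3Aux.deg d0 + 1) = R * Stmt3Aux.deg d0 + R := by ring
          omega
      have hRdeg : R * Stmt3Aux.deg d = R * Stmt3Aux.deg d0 := by rw [hdeg]
      have e2 : V (c d) + B * psi d = V (c d0) + B * psi d0 := by omega
      have hpsieq : psi d = psi d0 := by
        rcases Nat.lt_trichotomy (psi d) (psi d0) with hlt | he | hgt
        · exfalso
          have hm : B * (psi d + 1) ≤ B * psi d0 := Nat.mul_le_mul_left _ (by omega)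
          have hexp : B * (psi d + 1) = B * psi d + B := by ring
          omega
        · exact he
        · exfalso
          have hm : B * (psi d0 + 1) ≤ B * psi d := Nat.mul_le_mul_left _ (by omega)
          have hexp : B * (psi d0 + 1) = B * psi d0 + B := by ring
          omega
      have hfun : (fun i : Fin n => d i) = (fun i : Fin n => d0 i) := by
        apply Stmt3Aux.base_inj n B
        · intro i
          have := Stmt3Aux.apply_le_deg d i
          omega
        · intro i
          have := Stmt3Aux.apply_le_deg d0 i
          omega
        · exact hpsieq
      ext i
      exact congrFun hfun i
    · push_neg at hdD
      have h1 : R * (D + 1) ≤ R * Stmt3Aux.deg d := Nat.mul_le_mul_left _ (by omega)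
      have h2 : φ d = V (c d) + wsum d := rfl
      have h3 := hdecomp d
      have h4 : R * (D + 1) = R * D + R := by ring
      omega
  -- truncations
  set Dk : ℕ → Finset (Fin n →₀ ℕ) := fun k =>
    (Finset.Iic (Finsupp.equivFunOnFinite.symm fun _ => k)).filter
      (fun d => Stmt3Aux.deg d < k) with hDk
  have memDk : ∀ (k : ℕ) (d : Fin n →₀ ℕ), Stmt3Aux.deg d < k → d ∈ Dk k := by
    intro k d hd
    rw [hDk, Finset.mem_filter, Finset.mem_Iic]
    refine ⟨?_, hd⟩
    rw [Finsupp.le_def]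
    intro i
    simp only [Finsupp.equivFunOnFinite_symm_apply_apply]
    exact le_trans (Stmt3Aux.apply_le_deg d i) (by omega)
  have memDk' : ∀ (k : ℕ) (d : Fin n →₀ ℕ), d ∈ Dk k → Stmt3Aux.deg d < k :=
    fun k d hd => (Finset.mem_filter.mp hd).2
  set T : ℕ → MvPolynomial (Fin n) O :=
    fun k => ∑ d ∈ Dk k, MvPolynomial.monomial d (c d) with hT
  set bs : ℕ → O := fun k => MvPolynomial.eval a (T k) with hbs
  have hbsum : ∀ k, bs k = ∑ d ∈ Dk k, c d * π ^ wsum d := by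
    intro k
    rw [hbs, hT]
    simp only [map_sum, MvPolynomial.eval_monomial]
    apply Finset.sum_congr rfl
    intro d _
    congr 1
    rw [Finsupp.prod_fintype _ _ (fun i => pow_zero _)]
    rw [ha]
    simp only
    rw [Finset.prod_congr rfl (fun i _ => (pow_mul π (w i) (d i)).symm),
      Finset.prod_pow_eq_pow_sum]
    congr 1
    rw [hwsum]
    exact Finset.sum_congr rfl fun i _ => Nat.mul_comm _ _
  have hterm : ∀ (m : ℕ) (d : Fin n →₀ ℕ), m ≤ Stmt3Aux.deg d →
      c d * π ^ wsum d ∈ (IsLocalRing.maximalIdeal O) ^ m := by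
    intro m d hd
    apply Ideal.mul_mem_left
    have h1 : π ^ wsum d ∈ (IsLocalRing.maximalIdeal O) ^ wsum d := Ideal.pow_mem_pow hπp _
    exact Ideal.pow_le_pow_right (le_trans hd (hwge d)) h1
  have hcauchy : ∀ {m l : ℕ}, m ≤ l →
      bs m ≡ bs l [SMOD ((IsLocalRing.maximalIdeal O) ^ m • ⊤ : Submodule O O)] := by
    intro m l hml
    rw [SModEq.sub_mem, hsmul]
    have hsub : Dk m ⊆ Dk l := by
      intro d hd
      exact memDk l d (lt_of_lt_of_le (memDk' m d hd) hml)
    rw [hbsum, hbsum, ← Finset.sum_sdiff hsub]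
    have heq : ∀ A S : O, A - (S + A) = -S := fun A S => by ring
    rw [heq]
    apply Submodule.neg_mem
    apply Ideal.sum_mem
    intro d hd
    rw [Finset.mem_sdiff] at hd
    apply hterm
    by_contra hlt
    exact hd.2 (memDk m d (by omega))
  obtain ⟨b, hb⟩ := IsPrecomplete.prec (IsAdicComplete.toIsPrecomplete) @hcauchy
  have hbk : ∀ k, b - bs k ∈ (IsLocalRing.maximalIdeal O) ^ k := by
    intro k
    have := (hb k).symm
    rw [SModEq.sub_mem, hsmul] at this
    exact this
  refine ⟨a, haP, b, ?_, ?_⟩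
  · -- b ≠ 0
    intro hb0
    set K : ℕ := u + Stmt3Aux.deg d0 + 1 with hK
    have hd0K : d0 ∈ Dk K := memDk K d0 (by omega)
    have hsplit : bs K = c d0 * π ^ wsum d0 + ∑ d ∈ (Dk K).erase d0, c d * π ^ wsum d := by
      rw [hbsum, ← Finset.add_sum_erase _ _ hd0K]
    obtain ⟨hcd0eq, hY0⟩ := hVY (c d0) hd0c
    set s : O := ∑ d ∈ (Dk K).erase d0,
        (if c d = 0 then 0 else π ^ (φ d - (u + 1)) * Y (c d)) with hs
    have hrest : ∑ d ∈ (Dk K).erase d0, c d * π ^ wsum d = π ^ (u + 1) * s := by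
      rw [hs, Finset.mul_sum]
      apply Finset.sum_congr rfl
      intro d hd
      have hdne : d ≠ d0 := Finset.ne_of_mem_erase hd
      by_cases hcd : c d = 0
      · simp [hcd]
      · simp only [if_neg hcd]
        obtain ⟨hde, _⟩ := hVY (c d) hcd
        have hphi : u + 1 ≤ φ d := key d hcd hdne
        have hphid : φ d = V (c d) + wsum d := rfl
        calc c d * π ^ wsum d = π ^ V (c d) * Y (c d) * π ^ wsum d := by rw [← hde]
          _ = π ^ (V (c d) + wsum d) * Y (c d) := by rw [pow_add]; ring
          _ = π ^ (u + 1 + (φ d - (u + 1))) * Y (c d) := by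
              congr 2
              omega
          _ = π ^ (u + 1) * (π ^ (φ d - (u + 1)) * Y (c d)) := by rw [pow_add]; ring
    have hmain : c d0 * π ^ wsum d0 = π ^ u * Y (c d0) := by
      have hu' : u = V (c d0) + wsum d0 := rfl
      calc c d0 * π ^ wsum d0 = π ^ V (c d0) * Y (c d0) * π ^ wsum d0 := by rw [← hcd0eq]
        _ = π ^ (V (c d0) + wsum d0) * Y (c d0) := by rw [pow_add]; ring
        _ = π ^ u * Y (c d0) := by rw [← hu']
    have hbsK : bs K = π ^ u * (Y (c d0) + π * s) := by
      rw [hsplit, hrest, hmain, pow_succ]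
      ring
    have hdvd : π ^ (u + 1) ∣ bs K := by
      have h1 : b - bs K ∈ (IsLocalRing.maximalIdeal O) ^ K := hbk K
      rw [hb0, zero_sub] at h1
      have h2 : bs K ∈ (IsLocalRing.maximalIdeal O) ^ K := by
        have := Submodule.neg_mem _ h1
        simpa using this
      have h3 : bs K ∈ (IsLocalRing.maximalIdeal O) ^ (u + 1) :=
        Ideal.pow_le_pow_right (by omega) h2
      exact (hmem _ _).mp h3
    rw [hbsK] at hdvd
    have hstep : π ∣ Y (c d0) + π * s := by
      have hrw : π ^ (u + 1) = π ^ u * π := by rw [pow_succ]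
      rw [hrw] at hdvd
      exact (mul_dvd_mul_iff_left (pow_ne_zero u hπ0)).mp hdvd
    have hps : π ∣ π * s := ⟨s, rfl⟩
    have : π ∣ Y (c d0) := by
      have h := hstep.sub hps
      simpa using h
    exact hY0 this
  · intro k g hg
    have h1 : b - bs k ∈ (IsLocalRing.maximalIdeal O) ^ k := hbk k
    have h2 : bs k - MvPolynomial.eval a g ∈ (IsLocalRing.maximalIdeal O) ^ k := by
      rw [hbs]
      rw [← map_sub]
      apply Stmt3Aux.eval_mem _ a haP
      intro d hd
      by_contra hlt
      push_neg at hlt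
      rw [MvPolynomial.mem_support_iff] at hd
      apply hd
      have hcf : MvPowerSeries.coeff d (f - (g : MvPowerSeries (Fin n) O)) = 0 :=
        Stmt3Aux.pow_span_X_le_lowZero k hg d hlt
      rw [map_sub, sub_eq_zero] at hcf
      have hcg : MvPolynomial.coeff d g = c d := by
        show _ = MvPowerSeries.coeff d f
        rw [hcf, MvPolynomial.coeff_coe]
      have hcT : MvPolynomial.coeff d (T k) = c d := by
        rw [hT, MvPolynomial.coeff_sum]
        rw [Finset.sum_congr rfl (fun e _ => MvPolynomial.coeff_monomial d e (c e))]
        rw [Finset.sum_ite_eq' (Dk k) d c]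
        simp [memDk k d hlt]
      rw [MvPolynomial.coeff_sub, hcT, hcg, sub_self]
    have := Submodule.add_mem _ h1 h2
    simpa using this
end

section
/- Let F be the free group on two generators γ, δ, with length function ℓ(h) = min Σ|m_i| over expressions h = γ^{m_1} δ^{m_2} ⋯. Set Γ = {1, γ, δ, γδ, δγ}, S_m = {g : ℓ(g) ≤ m}, and for a subset S define Σ(S) = {g_1 g_2 : g_1, g_2, g_1^{-1} g_2 ∈ S} ∪ {g_1^{-1} g_2 : g_1, g_2, g_1 g_2 ∈ S}. Then (i) S_2 ⊆ Σ(Σ(Γ)), and (ii) S_m ⊆ Σ(Σ(Σ(S_{m−1}))) for all m ≥ 3. -/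
noncomputable section

namespace Stmt10

/-- The free group on two generators `γ, δ`. -/
abbrev F : Type := FreeGroup (Fin 2)

def γ : F := FreeGroup.of 0

def δ : F := FreeGroup.of 1

/-- The element `γ^{m₁} δ^{m₂} γ^{m₃} ⋯` determined by a list of integer exponents. -/
def wordOf (ms : List ℤ) : F :=
  (ms.zipIdx.map (fun q => (if q.2 % 2 = 0 then γ else δ) ^ q.1)).prod

/-- The length function `ℓ(h) = min Σ |mᵢ|` over all expressions `h = γ^{m₁} δ^{m₂} ⋯`. -/
def len (h : F) : ℕ :=
  sInf {n : ℕ | ∃ ms : List ℤ, h = wordOf ms ∧ n = (ms.map Int.natAbs).sum}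

/-- `S_m = {g : ℓ(g) ≤ m}`. -/
def S (m : ℕ) : Set F := {g : F | len g ≤ m}

/-- `Γ = {1, γ, δ, γδ, δγ}`. -/
def Γ : Set F := {1, γ, δ, γ * δ, δ * γ}

/-- `Σ(S) = {g₁g₂ : g₁, g₂, g₁⁻¹g₂ ∈ S} ∪ {g₁⁻¹g₂ : g₁, g₂, g₁g₂ ∈ S}`. -/
def Sig (T : Set F) : Set F :=
  {x : F | ∃ g₁ ∈ T, ∃ g₂ ∈ T, g₁⁻¹ * g₂ ∈ T ∧ x = g₁ * g₂} ∪
    {x : F | ∃ g₁ ∈ T, ∃ g₂ ∈ T, g₁ * g₂ ∈ T ∧ x = g₁⁻¹ * g₂}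

/-- the swap automorphism -/
def φ : F →* F := FreeGroup.map (fun i : Fin 2 => 1 - i)

lemma φγ : φ γ = δ := by simp [φ, γ, δ, FreeGroup.map.of]
lemma φδ : φ δ = γ := by simp [φ, γ, δ, FreeGroup.map.of]
lemma φφ (g : F) : φ (φ g) = g := by
  show (FreeGroup.map _) ((FreeGroup.map _) g) = g
  rw [FreeGroup.map.comp]
  have h : ((fun i : Fin 2 => 1 - i) ∘ (fun i : Fin 2 => 1 - i)) = id := by
    funext i; fin_cases i <;> rfl
  rw [h, FreeGroup.map.id]

lemma wordOf_nil : wordOf [] = 1 := rfl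

lemma aux_enumFrom (f : ℤ × ℕ → F) (ms : List ℤ) (k : ℕ)
    (hf : ∀ j a, f (a, j+1) = φ (f (a, j))) :
    ((ms.zipIdx (k+1)).map f).prod = φ (((ms.zipIdx k).map f).prod) := by
  induction ms generalizing k with
  | nil => simp
  | cons a ms ih => simp [List.zipIdx_cons, hf, ih (k+1)]

lemma wordOf_cons (e : ℤ) (ms : List ℤ) : wordOf (e :: ms) = γ ^ e * φ (wordOf ms) := by
  unfold wordOf
  rw [List.zipIdx_cons]
  have h0 : ms.zipIdx = ms.zipIdx 0 := rfl
  rw [List.map_cons, List.prod_cons, h0]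
  congr 1
  exact aux_enumFrom _ ms 0 (by
      intro j a
      rcases Nat.even_or_odd j with h | h
      · have h1 : j % 2 = 0 := Nat.even_iff.mp h
        have h2 : (j+1) % 2 = 1 := by omega
        simp [h1, h2, φγ]
      · have h1 : j % 2 = 1 := Nat.odd_iff.mp h
        have h2 : (j+1) % 2 = 0 := by omega
        simp [h1, h2, φδ])



/-! ### representations and len -/

def RepSet (h : F) : Set ℕ := {n : ℕ | ∃ ms : List ℤ, h = wordOf ms ∧ n = (ms.map Int.natAbs).sum}

lemma repset_nonempty (g : F) : (RepSet g).Nonempty := by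
  have key : ∀ g : F, ∃ ms : List ℤ, g = wordOf ms := by
    have hφ : ∀ g : F, (∃ ms, g = wordOf ms) → ∃ ms, φ g = wordOf ms := by
      rintro g ⟨ms, rfl⟩
      exact ⟨0 :: ms, by rw [wordOf_cons]; simp⟩
    have hγ : ∀ (e : ℤ) (g : F), (∃ ms, g = wordOf ms) → ∃ ms, γ ^ e * g = wordOf ms := by
      rintro e g hg
      obtain ⟨ns, hns⟩ := hφ g hg
      exact ⟨e :: ns, by rw [wordOf_cons, ← hns, φφ]⟩
    have hδ : ∀ (e : ℤ) (g : F), (∃ ms, g = wordOf ms) → ∃ ms, δ ^ e * g = wordOf ms := by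
      rintro e g hg
      obtain ⟨ns, hns⟩ := hγ e (φ g) (hφ g hg)
      refine ⟨0 :: ns, ?_⟩
      rw [wordOf_cons, ← hns]
      simp [map_mul, map_zpow, φγ, φφ]
    -- closure under multiplication
    have hmul : ∀ ms (h : F), (∃ ns, h = wordOf ns) → ∃ ks, wordOf ms * h = wordOf ks := by
      intro ms
      induction ms with
      | nil => intro h hh; simpa [wordOf_nil] using hh
      | cons e ms ih =>
        intro h hh
        have h1 : ∃ ks, wordOf ms * φ h = wordOf ks := ih (φ h) (hφ h hh)
        have h2 := hφ _ h1
        have : φ (wordOf ms * φ h) = φ (wordOf ms) * h := by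
          rw [map_mul, φφ]
        rw [this] at h2
        obtain ⟨ks, hks⟩ := hγ e _ h2
        exact ⟨ks, by rw [← hks, wordOf_cons, mul_assoc]⟩
    intro g
    induction g using FreeGroup.induction_on with
    | C1 => exact ⟨[], by simp [wordOf_nil]⟩
    | of x =>
      fin_cases x
      · exact ⟨[1], by rw [wordOf_cons]; simp [wordOf_nil]; rfl⟩
      · exact ⟨[0, 1], by rw [wordOf_cons, wordOf_cons]; simp [wordOf_nil, φγ]; rfl⟩
    | inv_of x hx =>
      obtain ⟨ms, hms⟩ := hx
      fin_cases x
      · have := hγ (-1) (wordOf []) ⟨[], rfl⟩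
        simpa [wordOf_nil, γ] using this
      · have := hδ (-1) (wordOf []) ⟨[], rfl⟩
        simpa [wordOf_nil, δ] using this
    | mul x y hx hy =>
      obtain ⟨ms, hms⟩ := hx
      rw [hms]
      exact hmul ms y hy
  obtain ⟨ms, hms⟩ := key g
  exact ⟨(ms.map Int.natAbs).sum, ms, hms, rfl⟩

lemma len_spec (g : F) : ∃ ms : List ℤ, g = wordOf ms ∧ len g = (ms.map Int.natAbs).sum :=
  Nat.sInf_mem (repset_nonempty g)

lemma len_le (g : F) (ms : List ℤ) (h : g = wordOf ms) : len g ≤ (ms.map Int.natAbs).sum :=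
  Nat.sInf_le ⟨ms, h, rfl⟩

lemma len_one : len (1 : F) ≤ 0 := len_le 1 [] (by simp [wordOf_nil])

lemma len_phi_le (g : F) : len (φ g) ≤ len g := by
  obtain ⟨ms, hms, hlen⟩ := len_spec g
  have : φ g = wordOf (0 :: ms) := by rw [wordOf_cons, hms]; simp
  calc len (φ g) ≤ ((0 :: ms).map Int.natAbs).sum := len_le _ _ this
    _ = len g := by simp [hlen]

lemma len_gamma_mul (e : ℤ) (g : F) : len (γ ^ e * g) ≤ e.natAbs + len g := by
  obtain ⟨ms, hms, hlen⟩ := len_spec g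
  have h1 : φ g = wordOf (0 :: ms) := by rw [wordOf_cons, hms]; simp
  have : γ ^ e * g = wordOf (e :: 0 :: ms) := by
    rw [wordOf_cons, ← h1, φφ]
  calc len (γ ^ e * g) ≤ ((e :: 0 :: ms).map Int.natAbs).sum := len_le _ _ this
    _ = e.natAbs + len g := by simp [hlen]

lemma len_delta_mul (e : ℤ) (g : F) : len (δ ^ e * g) ≤ e.natAbs + len g := by
  have h : δ ^ e * g = φ (γ ^ e * φ g) := by
    rw [map_mul, map_zpow, φγ, φφ]
  rw [h]
  calc len (φ (γ ^ e * φ g)) ≤ len (γ ^ e * φ g) := len_phi_le _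
    _ ≤ e.natAbs + len (φ g) := len_gamma_mul _ _
    _ ≤ e.natAbs + len g := by have := len_phi_le g; omega

/-! ### letters -/

def Ltr : Set F := {γ, γ⁻¹, δ, δ⁻¹}

lemma Ltr_inv {x : F} (h : x ∈ Ltr) : x⁻¹ ∈ Ltr := by
  rcases h with h | h | h | h <;> subst h <;> simp [Ltr]

lemma Ltr_phi {x : F} (h : x ∈ Ltr) : φ x ∈ Ltr := by
  rcases h with h | h | h | h <;> subst h <;> simp [Ltr, φγ, φδ]

lemma len_letter_mul {x : F} (h : x ∈ Ltr) (g : F) : len (x * g) ≤ 1 + len g := by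
  rcases h with h | h | h | h <;> subst h
  · simpa using len_gamma_mul 1 g
  · simpa using len_gamma_mul (-1) g
  · simpa using len_delta_mul 1 g
  · simpa using len_delta_mul (-1) g

lemma len_letters (L : List F) (h : ∀ x ∈ L, x ∈ Ltr) : len L.prod ≤ L.length := by
  induction L with
  | nil => simpa using len_one
  | cons x L ih =>
    rw [List.prod_cons]
    calc len (x * L.prod) ≤ 1 + len L.prod := len_letter_mul (h x (by simp)) _
      _ ≤ 1 + L.length := by
          have := ih (fun y hy => h y (by simp [hy]))
          omega
      _ = (x :: L).length := by simp [add_comm]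

lemma mem_S_of_letters {k : ℕ} (L : List F) (h : ∀ x ∈ L, x ∈ Ltr) (hl : L.length ≤ k) :
    L.prod ∈ S k := le_trans (len_letters L h) hl

/-- expand a zpow of a letter-generator into letters -/
lemma zpow_letters (x : F) (hx : x ∈ Ltr) (e : ℤ) :
    ∃ L : List F, (∀ y ∈ L, y ∈ Ltr) ∧ L.length = e.natAbs ∧ x ^ e = L.prod := by
  rcases le_or_gt 0 e with h | h
  · refine ⟨List.replicate e.natAbs x, by intro y hy; simp at hy; simp [hy.2, hx], by simp, ?_⟩
    rw [List.prod_replicate, ← zpow_natCast]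
    congr 1
    omega
  · refine ⟨List.replicate e.natAbs x⁻¹, by intro y hy; simp at hy; simp [hy.2, Ltr_inv hx], by simp, ?_⟩
    rw [List.prod_replicate, ← zpow_natCast, inv_zpow, ← zpow_neg]
    congr 1
    omega

lemma exists_letters_of_wordOf (ms : List ℤ) :
    ∃ L : List F, (∀ y ∈ L, y ∈ Ltr) ∧ L.length = (ms.map Int.natAbs).sum ∧ wordOf ms = L.prod := by
  induction ms with
  | nil => exact ⟨[], by simp, by simp, by simp [wordOf_nil]⟩
  | cons e ms ih =>
    obtain ⟨L, hL, hlen, hprod⟩ := ih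
    obtain ⟨K, hK, hKlen, hKprod⟩ := zpow_letters γ (by simp [Ltr]) e
    refine ⟨K ++ L.map φ, ?_, by simp [hKlen, hlen], ?_⟩
    · intro y hy
      rcases List.mem_append.mp hy with h | h
      · exact hK y h
      · obtain ⟨z, hz, rfl⟩ := List.mem_map.mp h
        exact Ltr_phi (hL z hz)
    · rw [wordOf_cons, hprod, List.prod_append, ← hKprod]
      congr 1
      exact map_list_prod φ L

lemma exists_letters_of_mem_S {k : ℕ} {g : F} (hg : g ∈ S k) :
    ∃ L : List F, (∀ y ∈ L, y ∈ Ltr) ∧ L.length ≤ k ∧ g = L.prod := by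
  obtain ⟨ms, hms, hlen⟩ := len_spec g
  obtain ⟨L, hL, hLlen, hprod⟩ := exists_letters_of_wordOf ms
  exact ⟨L, hL, by rw [hLlen, ← hlen]; exact hg, by rw [hms, hprod]⟩


/-! ### Sig machinery -/

lemma memP {U : Set F} {g₁ g₂ x : F} (h1 : g₁ ∈ U) (h2 : g₂ ∈ U) (h3 : g₁⁻¹ * g₂ ∈ U)
    (hx : x = g₁ * g₂) : x ∈ Sig U := Or.inl ⟨g₁, h1, g₂, h2, h3, hx⟩

lemma memD {U : Set F} {g₁ g₂ x : F} (h1 : g₁ ∈ U) (h2 : g₂ ∈ U) (h3 : g₁ * g₂ ∈ U)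
    (hx : x = g₁⁻¹ * g₂) : x ∈ Sig U := Or.inr ⟨g₁, h1, g₂, h2, h3, hx⟩

lemma subset_Sig {U : Set F} (h1 : (1 : F) ∈ U) : U ⊆ Sig U := by
  intro u hu
  exact memP h1 hu (by simpa using hu) (by simp)

lemma one_mem_Sig {U : Set F} (h1 : (1 : F) ∈ U) : (1 : F) ∈ Sig U := subset_Sig h1 h1

lemma one_mem_S (k : ℕ) : (1 : F) ∈ S k := le_trans len_one (Nat.zero_le k)

/-- inverse of a product of letters as a list -/
lemma inv_prod (L : List F) : (L.prod)⁻¹ = (L.reverse.map (fun x => x⁻¹)).prod := by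
  rw [List.prod_inv_reverse, List.map_reverse]

lemma letters_revinv {L : List F} (h : ∀ x ∈ L, x ∈ Ltr) :
    ∀ x ∈ (L.reverse.map (fun x => x⁻¹)), x ∈ Ltr := by
  intro x hx
  obtain ⟨z, hz, rfl⟩ := List.mem_map.mp hx
  exact Ltr_inv (h z (List.mem_reverse.mp hz))

/-- The key criterion: a letter word of length ≤ m whose first letter reappears
is in `Sig (S (m-1))`. -/
lemma crit {m : ℕ} (hm : 1 ≤ m) (z : F) (P Q : List F) (hz : z ∈ Ltr)
    (hP : ∀ x ∈ P, x ∈ Ltr) (hQ : ∀ x ∈ Q, x ∈ Ltr)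
    (hlen : P.length + Q.length + 2 ≤ m) :
    ((z :: P) ++ z :: Q).prod ∈ Sig (S (m-1)) := by
  have hzP : ∀ x ∈ z :: P, x ∈ Ltr := by
    intro x hx; rcases List.mem_cons.mp hx with rfl | hx
    exacts [hz, hP x hx]
  have hzQ : ∀ x ∈ z :: Q, x ∈ Ltr := by
    intro x hx; rcases List.mem_cons.mp hx with rfl | hx
    exacts [hz, hQ x hx]
  refine memP (g₁ := (z :: P).prod) (g₂ := (z :: Q).prod)
    (mem_S_of_letters _ hzP (by simp; omega))
    (mem_S_of_letters _ hzQ (by simp; omega)) ?_ ?_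
  · have heq : (z :: P).prod⁻¹ * (z :: Q).prod
        = ((P.reverse.map (fun x => x⁻¹)) ++ Q).prod := by
      rw [List.prod_append, ← inv_prod]
      simp [List.prod_cons, mul_assoc]
    rw [heq]
    refine mem_S_of_letters _ ?_ (by simp; omega)
    intro x hx
    rcases List.mem_append.mp hx with h | h
    exacts [letters_revinv hP x h, hQ x h]
  · rw [List.prod_append]

/-! ### The main combinatorial lemma -/

lemma gamma_ne_delta : γ ≠ δ := by
  simp [γ, δ, FreeGroup.of_injective.ne_iff]

def expSum : F →* Multiplicative ℤ :=
  FreeGroup.lift (fun j : Fin 2 => Multiplicative.ofAdd (if j = 0 then (1 : ℤ) else 0))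

def expSum' : F →* Multiplicative ℤ :=
  FreeGroup.lift (fun j : Fin 2 => Multiplicative.ofAdd (if j = 1 then (1 : ℤ) else 0))

lemma expSum_gamma : Multiplicative.toAdd (expSum γ) = 1 := by
  simp [expSum, γ, FreeGroup.lift_apply_of]

lemma expSum_delta : Multiplicative.toAdd (expSum δ) = 0 := by
  simp [expSum, δ, FreeGroup.lift_apply_of]

lemma expSum'_delta : Multiplicative.toAdd (expSum' δ) = 1 := by
  simp [expSum', δ, FreeGroup.lift_apply_of]

lemma letters_distinct :
    γ ≠ δ ∧ γ ≠ γ⁻¹ ∧ γ ≠ δ⁻¹ ∧ δ ≠ γ⁻¹ ∧ δ ≠ δ⁻¹ ∧ γ⁻¹ ≠ δ⁻¹ := by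
  refine ⟨gamma_ne_delta, ?_, ?_, ?_, ?_, ?_⟩ <;> intro h
  · have := congrArg (fun g => Multiplicative.toAdd (expSum g)) h
    simp [expSum_gamma] at this
  · have := congrArg (fun g => Multiplicative.toAdd (expSum g)) h
    simp [expSum_gamma, expSum_delta] at this
  · have := congrArg (fun g => Multiplicative.toAdd (expSum g)) h
    simp [expSum_gamma, expSum_delta] at this
  · have := congrArg (fun g => Multiplicative.toAdd (expSum' g)) h
    simp [expSum'_delta] at this
  · have := congrArg (fun g => Multiplicative.toAdd (expSum g)) h
    simp [expSum_gamma, expSum_delta] at this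

/-- main lemma: every letter word of length ≤ m, m ≥ 3, is in Σ²(S (m-1)). -/
lemma mainB {m : ℕ} (hm : 3 ≤ m) (L : List F) (hL : ∀ x ∈ L, x ∈ Ltr)
    (hlen : L.length ≤ m) : L.prod ∈ Sig (Sig (S (m-1))) := by
  have h1S : (1 : F) ∈ S (m-1) := one_mem_S _
  have h1Sig : (1 : F) ∈ Sig (S (m-1)) := one_mem_Sig h1S
  have hTsub : S (m-1) ⊆ Sig (S (m-1)) := subset_Sig h1S
  -- if the word is short, done
  rcases lt_or_ge L.length m with hshort | hfull
  · exact subset_Sig h1Sig (hTsub (mem_S_of_letters L hL (by omega)))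
  have hLm : L.length = m := le_antisymm hlen hfull
  -- L is nonempty: L = z :: t
  obtain ⟨z, t, rfl⟩ : ∃ z t, L = z :: t := by
    cases L with
    | nil => simp at hLm; omega
    | cons a b => exact ⟨a, b, rfl⟩
  have hz : z ∈ Ltr := hL z (by simp)
  have ht : ∀ x ∈ t, x ∈ Ltr := fun x hx => hL x (by simp [hx])
  -- Case 1: head reappears
  by_cases hc1 : z ∈ t
  · obtain ⟨P, Q, rfl⟩ := List.append_of_mem hc1
    exact subset_Sig h1Sig (crit (by omega) z P Q hz
      (fun x hx => ht x (by simp [hx])) (fun x hx => ht x (by simp [hx]))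
      (by simp at hLm ⊢; omega))
  -- Case 3: some later letter is the inverse of an earlier one
  by_cases hc3 : ¬ (z :: t).Pairwise (fun a b => b ≠ a⁻¹)
  · -- extract a decomposition  L = A ++ u :: (B ++ u⁻¹ :: C)
    obtain ⟨A, u, B, C, hdec⟩ :
        ∃ A u B C, z :: t = A ++ u :: (B ++ u⁻¹ :: C) := by
      clear hc1 hz ht hlen hfull hLm hL
      generalize z :: t = L' at hc3
      induction L' with
      | nil => simp at hc3
      | cons a l ih =>
        rw [List.pairwise_cons] at hc3
        by_cases ha : ∃ y ∈ l, y = a⁻¹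
        · obtain ⟨y, hy, rfl⟩ := ha
          obtain ⟨s, t', rfl⟩ := List.append_of_mem hy
          exact ⟨[], a, s, t', by simp⟩
        · push_neg at ha
          have : ¬ l.Pairwise (fun a b => b ≠ a⁻¹) := by
            intro hp
            exact hc3 ⟨fun y hy h => ha y hy (by rw [h]), hp⟩
          obtain ⟨A, u, B, C, rfl⟩ := ih this
          exact ⟨a :: A, u, B, C, by simp⟩
    rw [hdec]
    rw [hdec] at hL hLm
    have hlens : A.length + B.length + C.length + 2 = m := by
      simp at hLm; omega
    have hA : ∀ x ∈ A, x ∈ Ltr := fun x hx => hL x (by simp [hx])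
    have hB : ∀ x ∈ B, x ∈ Ltr := fun x hx => hL x (by simp [hx])
    have hC : ∀ x ∈ C, x ∈ Ltr := fun x hx => hL x (by simp [hx])
    have hu : u ∈ Ltr := hL u (by simp)
    refine memP (g₁ := (A ++ [u]).prod) (g₂ := (B ++ u⁻¹ :: C).prod)
      (hTsub (mem_S_of_letters _ ?_ (by simp; omega)))
      (hTsub (mem_S_of_letters _ ?_ (by simp; omega))) ?_ ?_
    · intro x hx
      rcases List.mem_append.mp hx with h | h
      exacts [hA x h, by simp at h; simp [h, hu]]
    · intro x hx
      rcases List.mem_append.mp hx with h | h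
      · exact hB x h
      · rcases List.mem_cons.mp h with rfl | h
        exacts [Ltr_inv hu, hC x h]
    · -- third element: u⁻¹ (revinv A) B u⁻¹ C, criterion applies
      have heq : ((A ++ [u]).prod)⁻¹ * (B ++ u⁻¹ :: C).prod
          = ((u⁻¹ :: ((A.reverse.map (fun x => x⁻¹)) ++ B)) ++ u⁻¹ :: C).prod := by
        simp [List.prod_append, List.prod_cons, List.prod_inv_reverse,
          List.map_reverse, mul_assoc]
      rw [heq]
      refine crit (by omega) u⁻¹ _ C (Ltr_inv hu) ?_ hC (by simp; omega)
      intro x hx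
      rcases List.mem_append.mp hx with h | h
      exacts [letters_revinv hA x h, hB x h]
    · simp [List.prod_append, List.prod_cons, mul_assoc]
  push_neg at hc3
  -- Case 2: the last letter reappears earlier
  obtain ⟨M, w, hMw⟩ : ∃ M w, z :: t = M ++ [w] := by
    rcases List.eq_nil_or_concat (z :: t) with h | ⟨M, w, h⟩
    · simp at h
    · exact ⟨M, w, by simpa [List.concat_eq_append] using h⟩
  by_cases hc2 : w ∈ M
  · obtain ⟨A, B, hAB⟩ := List.append_of_mem hc2
    rw [hMw, hAB]
    rw [hMw, hAB] at hL hLm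
    have hlens : A.length + B.length + 2 = m := by simp at hLm; omega
    have hA : ∀ x ∈ A, x ∈ Ltr := fun x hx => hL x (by simp [hx])
    have hB : ∀ x ∈ B, x ∈ Ltr := fun x hx => hL x (by simp [hx])
    have hw : w ∈ Ltr := hL w (by simp)
    -- the inverse of the word satisfies the criterion
    have hinv : (((A ++ w :: B) ++ [w]).prod)⁻¹
        = ((w⁻¹ :: (B.reverse.map (fun x => x⁻¹))) ++ w⁻¹ :: (A.reverse.map (fun x => x⁻¹))).prod := by
      simp [List.prod_append, List.prod_cons, List.prod_inv_reverse,
        List.map_reverse, mul_assoc]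
    refine memD (g₁ := (((A ++ w :: B) ++ [w]).prod)⁻¹) (g₂ := 1) ?_ h1Sig ?_ (by simp)
    · rw [hinv]
      refine crit (by omega) w⁻¹ _ _ (Ltr_inv hw) (letters_revinv hB) (letters_revinv hA)
        (by simp; omega)
    · rw [mul_one, hinv]
      refine crit (by omega) w⁻¹ _ _ (Ltr_inv hw) (letters_revinv hB) (letters_revinv hA)
        (by simp; omega)
  -- Case 4: contradiction
  exfalso
  obtain ⟨b, r, rfl⟩ : ∃ b r, t = b :: r := by
    cases t with
    | nil => simp at hLm; omega
    | cons a l => exact ⟨a, l, rfl⟩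
  have hr : r ≠ [] := by
    intro h; subst h; simp at hLm; omega
  have hb : b ∈ Ltr := hL b (by simp)
  rcases M with _ | ⟨m0, M⟩
  · exact absurd (congrArg List.length hMw) (by simp)
  rcases M with _ | ⟨m1, M⟩
  · simp only [List.cons_append, List.nil_append] at hMw
    injection hMw with h0 h1
    injection h1 with h1 h2
    exact hr h2
  simp only [List.cons_append] at hMw
  injection hMw with h0 h1
  injection h1 with h1 h2
  subst h0; subst h1
  have hwr : w ∈ r := by rw [h2]; simp
  have hw : w ∈ Ltr := ht w (by simp [hwr])
  have hwz : w ≠ z := by intro h; exact hc2 (by simp [h])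
  have hwb : w ≠ b := by intro h; exact hc2 (by simp [h])
  have hbz : b ≠ z := by intro h; exact hc1 (by simp [h])
  have hp1 := (List.pairwise_cons.mp hc3).1
  have hp' := (List.pairwise_cons.mp hc3).2
  have hbzinv : b ≠ z⁻¹ := hp1 b (by simp)
  have hwzinv : w ≠ z⁻¹ := hp1 w (by simp [hwr])
  have hwbinv : w ≠ b⁻¹ := (List.pairwise_cons.mp hp').1 w hwr
  obtain ⟨d1, d2, d3, d4, d5, d6⟩ := letters_distinct
  clear hc1 hc2 hc3 hp1 hp' h2 hL ht hlen hfull hLm hwr hr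
  rcases hz with rfl | rfl | rfl | rfl <;>
    rcases hb with rfl | rfl | rfl | rfl <;>
      rcases hw with rfl | rfl | rfl | rfl <;>
        simp_all


/-! ### part (i) -/

lemma partI : S 2 ⊆ Sig (Sig Γ) := by
  intro g hg
  obtain ⟨L, hL, hlen, rfl⟩ := exists_letters_of_mem_S hg
  have hΓ1 : (1:F) ∈ Γ := by simp [Γ]
  have hΓγ : γ ∈ Γ := by simp [Γ]
  have hΓδ : δ ∈ Γ := by simp [Γ]
  have hΓγδ : γ * δ ∈ Γ := by simp [Γ]
  have hΓδγ : δ * γ ∈ Γ := by simp [Γ]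
  -- catalog of Sig Γ memberships
  have hU1 : (1:F) ∈ Sig Γ := one_mem_Sig hΓ1
  have hUsub : Γ ⊆ Sig Γ := subset_Sig hΓ1
  have hUγ : γ ∈ Sig Γ := hUsub hΓγ
  have hUδ : δ ∈ Sig Γ := hUsub hΓδ
  have hUγδ : γ * δ ∈ Sig Γ := hUsub hΓγδ
  have hUδγ : δ * γ ∈ Sig Γ := hUsub hΓδγ
  have hUγγ : γ * γ ∈ Sig Γ := memP hΓγ hΓγ (by simpa using hΓ1) rfl
  have hUδδ : δ * δ ∈ Sig Γ := memP hΓδ hΓδ (by simpa using hΓ1) rfl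
  have hUγi : γ⁻¹ ∈ Sig Γ := memD hΓγ hΓ1 (by simpa using hΓγ) (by group)
  have hUδi : δ⁻¹ ∈ Sig Γ := memD hΓδ hΓ1 (by simpa using hΓδ) (by group)
  have hUγiδ : γ⁻¹ * δ ∈ Sig Γ := memD hΓγ hΓδ hΓγδ rfl
  have hUδiγ : δ⁻¹ * γ ∈ Sig Γ := memD hΓδ hΓγ hΓδγ rfl
  have hUγiδi : γ⁻¹ * δ⁻¹ ∈ Sig Γ := memD hΓδγ hΓ1 (by simpa using hΓδγ) (by group)
  have hUδiγi : δ⁻¹ * γ⁻¹ ∈ Sig Γ := memD hΓγδ hΓ1 (by simpa using hΓγδ) (by group)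
  have hVsub : Sig Γ ⊆ Sig (Sig Γ) := subset_Sig hU1
  have hV1 : (1:F) ∈ Sig (Sig Γ) := one_mem_Sig hU1
  match L, hlen with
  | [], _ => simpa using hV1
  | [x], _ =>
    have hx := hL x (by simp)
    simp only [List.prod_cons, List.prod_nil, mul_one]
    rcases hx with rfl | rfl | rfl | rfl
    · exact hVsub hUγ
    · exact hVsub hUγi
    · exact hVsub hUδ
    · exact hVsub hUδi
  | [x, y], _ =>
    have hx := hL x (by simp)
    have hy := hL y (by simp)
    simp only [List.prod_cons, List.prod_nil, mul_one]
    rcases hx with rfl | rfl | rfl | rfl <;> rcases hy with rfl | rfl | rfl | rfl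
    · exact hVsub hUγγ
    · simpa using hV1
    · exact hVsub hUγδ
    · exact memD hUγi hUδi hUγiδi (by group)
    · simpa using hV1
    · exact memD hUγγ hU1 (by simpa using hUγγ) (by group)
    · exact hVsub hUγiδ
    · exact hVsub hUγiδi
    · exact hVsub hUδγ
    · exact memD hUδi hUγi hUδiγi (by group)
    · exact hVsub hUδδ
    · simpa using hV1
    · exact hVsub hUδiγ
    · exact hVsub hUδiγi
    · simpa using hV1
    · exact memD hUδδ hU1 (by simpa using hUδδ) (by group)
  | x :: y :: z' :: rest, hlen => simp at hlen

/-! ### part (ii) and conclusion -/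

lemma partII (m : ℕ) (hm : 3 ≤ m) : S m ⊆ Sig (Sig (Sig (S (m-1)))) := by
  intro g hg
  obtain ⟨L, hL, hlen, rfl⟩ := exists_letters_of_mem_S hg
  exact subset_Sig (one_mem_Sig (one_mem_Sig (one_mem_S _))) (mainB hm L hL hlen)

/-- `(i)` `S₂ ⊆ Σ(Σ(Γ))`, and `(ii)` `S_m ⊆ Σ(Σ(Σ(S_{m-1})))` for `m ≥ 3`. -/
theorem stmt10 :
    S 2 ⊆ Sig (Sig Γ) ∧ ∀ m : ℕ, 3 ≤ m → S m ⊆ Sig (Sig (Sig (S (m - 1)))) :=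
  ⟨partI, fun m hm => partII m hm⟩

end Stmt10
end
end

section
/- With R as above (the pro-p Cayley–Hamilton algebra on two generators over O[[t_1,t_2,t_3]] with the stated quadratic relations, p > 2), every element a ∈ R can be written as a = λ_1 + λ_2 u + λ_3 v + λ_4 (uv − vu) with λ_i ∈ O[[t_1,t_2,t_3]], where u = (γ−γ^{-1})/2 and v = (δ−δ^{-1})/2; i.e. R is generated as an O[[t_1,t_2,t_3]]-module by 1, u, v, uv − vu. -/
/-- With `R` as in Statement 13 (the pro-`p` Cayley–Hamilton algebra on
two generators `γ, δ` over `A = O[[t₁,t₂,t₃]]` with the stated quadratic relations, `p > 2`;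
modelled as a topological ring, algebra over `A` with central image, topologically generated
by `A, γ, δ`, in which the `A`-submodule spanned by `1, u, v, uv - vu` is closed), every
element `a ∈ R` can be written as `a = λ₁ + λ₂u + λ₃v + λ₄(uv - vu)` with
`λᵢ ∈ O[[t₁,t₂,t₃]]`, where `u = (γ-γ⁻¹)/2` and `v = (δ-δ⁻¹)/2`; i.e. `R` is generated as an
`O[[t₁,t₂,t₃]]`-module by `1, u, v, uv - vu`. -/
theorem stmt14 (p : ℕ) [Fact p.Prime] (hp2 : 2 < p)
    {O : Type*} [CommRing O] [IsDomain O] [IsDiscreteValuationRing O]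
    [IsAdicComplete (IsLocalRing.maximalIdeal O) O]
    [CharP (IsLocalRing.ResidueField O) p]
    {R : Type*} [Ring R] [Invertible (2 : R)] [TopologicalSpace R] [IsTopologicalRing R]
    [Algebra (MvPowerSeries (Fin 3) O) R]
    (hcent : ∀ (a : MvPowerSeries (Fin 3) O) (x : R),
      algebraMap (MvPowerSeries (Fin 3) O) R a * x = x * algebraMap (MvPowerSeries (Fin 3) O) R a)
    (t : Fin 3 → R)
    (ht : ∀ i, t i = algebraMap (MvPowerSeries (Fin 3) O) R (MvPowerSeries.X i))
    (γ δ : Rˣ)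
    (hγ : (γ : R) ^ 2 - 2 * (1 + t 0) * γ + 1 = 0)
    (hδ : (δ : R) ^ 2 - 2 * (1 + t 1) * δ + 1 = 0)
    (hγδ : ((γ : R) * δ) ^ 2 - 2 * (1 + t 2) * ((γ : R) * δ) + 1 = 0)
    (hδγ : ((δ : R) * γ) ^ 2 - 2 * (1 + t 2) * ((δ : R) * γ) + 1 = 0)
    (hdense : Dense (↑(Subring.closure
      (Set.range (algebraMap (MvPowerSeries (Fin 3) O) R) ∪ {(γ : R), (δ : R)})) : Set R))
    (u v : R)
    (hu : u = ⅟(2 : R) * ((γ : R) - (γ⁻¹ : Rˣ)))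
    (hv : v = ⅟(2 : R) * ((δ : R) - (δ⁻¹ : Rˣ)))
    (hclosed : IsClosed (↑(Submodule.span (MvPowerSeries (Fin 3) O)
      ({1, u, v, u * v - v * u} : Set R)) : Set R)) :
    ∀ x : R, ∃ l₁ l₂ l₃ l₄ : MvPowerSeries (Fin 3) O,
      x = algebraMap (MvPowerSeries (Fin 3) O) R l₁ + l₂ • u + l₃ • v +
        l₄ • (u * v - v * u) := by
  classical
  set A := MvPowerSeries (Fin 3) O with hA
  set φ := algebraMap A R with hφ
  -- 2 is a unit in A
  have h2O : IsUnit (2 : O) := by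
    rw [← IsLocalRing.notMem_maximalIdeal]
    intro hm
    have h2k : (2 : IsLocalRing.ResidueField O) = 0 := by
      have := (Ideal.Quotient.eq_zero_iff_mem (I := IsLocalRing.maximalIdeal O)).mpr hm
      rw [map_ofNat] at this; exact this
    have : ((2 : ℕ) : IsLocalRing.ResidueField O) = 0 := by push_cast; exact h2k
    have hdvd : p ∣ 2 := (CharP.cast_eq_zero_iff _ p 2).mp this
    have := Nat.le_of_dvd (by norm_num) hdvd
    omega
  have h2A : IsUnit (2 : A) := by
    have := h2O.map (algebraMap O A)
    simpa [map_ofNat] using this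
  obtain ⟨k, hk⟩ : ∃ k : A, 2 * k = 1 := by
    refine ⟨↑h2A.unit⁻¹, ?_⟩
    have h := h2A.unit.mul_inv
    rw [h2A.unit_spec] at h
    exact h
  -- scalar images and centrality
  have hφ0 : φ (1 + MvPowerSeries.X 0) = 1 + t 0 := by rw [map_add, map_one, ht]
  have hφ1 : φ (1 + MvPowerSeries.X 1) = 1 + t 1 := by rw [map_add, map_one, ht]
  have hφ2 : φ (1 + MvPowerSeries.X 2) = 1 + t 2 := by rw [map_add, map_one, ht]
  have c0 : ∀ x : R, (1 + t 0) * x = x * (1 + t 0) := fun x => by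
    rw [← hφ0, hcent]
  have c1 : ∀ x : R, (1 + t 1) * x = x * (1 + t 1) := fun x => by
    rw [← hφ1, hcent]
  have c2 : ∀ x : R, (1 + t 2) * x = x * (1 + t 2) := fun x => by
    rw [← hφ2, hcent]
  -- inverses of the units
  have hγγ : (γ : R) * γ = 2 * ((1 + t 0) * γ) - 1 := by
    rw [← sub_eq_zero, ← hγ]; noncomm_ring
  have hδδ : (δ : R) * δ = 2 * ((1 + t 1) * δ) - 1 := by
    rw [← sub_eq_zero, ← hδ]; noncomm_ring
  have hγi : ((γ⁻¹ : Rˣ) : R) = 2 * (1 + t 0) - γ := by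
    apply Units.inv_eq_of_mul_eq_one_right
    have h1 : (γ : R) * (2 * (1 + t 0) - γ) = 2 * ((γ : R) * (1 + t 0)) - γ * γ := by
      noncomm_ring
    rw [h1, ← c0, hγγ]
    noncomm_ring
  have hδi : ((δ⁻¹ : Rˣ) : R) = 2 * (1 + t 1) - δ := by
    apply Units.inv_eq_of_mul_eq_one_right
    have h1 : (δ : R) * (2 * (1 + t 1) - δ) = 2 * ((δ : R) * (1 + t 1)) - δ * δ := by
      noncomm_ring
    rw [h1, ← c1, hδδ]
    noncomm_ring
  have hεi : (((γ * δ)⁻¹ : Rˣ) : R) = 2 * (1 + t 2) - (γ : R) * δ := by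
    apply Units.inv_eq_of_mul_eq_one_right
    have hεε : ((γ : R) * δ) * ((γ : R) * δ) = 2 * ((1 + t 2) * ((γ : R) * δ)) - 1 := by
      rw [← sub_eq_zero, ← hγδ]; noncomm_ring
    have h1 : ((γ * δ : Rˣ) : R) * (2 * (1 + t 2) - (γ : R) * δ)
        = 2 * (((γ : R) * δ) * (1 + t 2)) - ((γ : R) * δ) * ((γ : R) * δ) := by
      rw [Units.val_mul]; noncomm_ring
    rw [h1, ← c2, hεε]
    noncomm_ring
  -- u and v in terms of γ, δ
  have hu' : u = (γ : R) - (1 + t 0) := by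
    rw [hu, hγi]
    have h1 : (γ : R) - (2 * (1 + t 0) - γ) = 2 * ((γ : R) - (1 + t 0)) := by noncomm_ring
    rw [h1, ← mul_assoc, invOf_mul_self, one_mul]
  have hv' : v = (δ : R) - (1 + t 1) := by
    rw [hv, hδi]
    have h1 : (δ : R) - (2 * (1 + t 1) - δ) = 2 * ((δ : R) - (1 + t 1)) := by noncomm_ring
    rw [h1, ← mul_assoc, invOf_mul_self, one_mul]
  -- the relation for δγ
  have hδγeq : (2 * (1 + t 1) - (δ : R)) * (2 * (1 + t 0) - (γ : R))
      = 2 * (1 + t 2) - (γ : R) * δ := by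
    rw [← hδi, ← hγi, ← Units.val_mul, ← mul_inv_rev, hεi]
  -- key identities
  have I1 : u * u = φ ((1 + MvPowerSeries.X 0) * (1 + MvPowerSeries.X 0) - 1) := by
    rw [map_sub, map_mul, map_one, hφ0, hu']
    have h1 : ((γ : R) - (1 + t 0)) * ((γ : R) - (1 + t 0))
        = γ * γ - (γ : R) * (1 + t 0) - (1 + t 0) * γ + (1 + t 0) * (1 + t 0) := by
      noncomm_ring
    rw [h1, hγγ, ← c0]
    noncomm_ring
  have I2 : v * v = φ ((1 + MvPowerSeries.X 1) * (1 + MvPowerSeries.X 1) - 1) := by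
    rw [map_sub, map_mul, map_one, hφ1, hv']
    have h1 : ((δ : R) - (1 + t 1)) * ((δ : R) - (1 + t 1))
        = δ * δ - (δ : R) * (1 + t 1) - (1 + t 1) * δ + (1 + t 1) * (1 + t 1) := by
      noncomm_ring
    rw [h1, hδδ, ← c1]
    noncomm_ring
  have I3 : u * v + v * u
      = φ (2 * ((1 + MvPowerSeries.X 2) - (1 + MvPowerSeries.X 1) * (1 + MvPowerSeries.X 0))) := by
    have hδγ' : (δ : R) * γ = 2 * (1 + t 2) - (γ : R) * δ
        - (4 * ((1 + t 1) * (1 + t 0)) - 2 * ((1 + t 1) * γ) - 2 * ((δ : R) * (1 + t 0))) := by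
      rw [← sub_eq_zero]
      rw [← sub_eq_zero] at hδγeq
      rw [← hδγeq]; noncomm_ring
    rw [map_mul, map_sub, map_mul, hφ2, hφ1, hφ0, hu', hv']
    have h1 : ((γ : R) - (1 + t 0)) * ((δ : R) - (1 + t 1))
        + ((δ : R) - (1 + t 1)) * ((γ : R) - (1 + t 0))
        = (γ : R) * δ + (δ : R) * γ - (γ : R) * (1 + t 1) - (1 + t 0) * δ
          - (δ : R) * (1 + t 0) - (1 + t 1) * γ + (1 + t 0) * (1 + t 1)
          + (1 + t 1) * (1 + t 0) := by noncomm_ring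
    rw [h1, hδγ', ← c1 (γ : R), c0 (δ : R), c0 ((1 : R) + t 1)]
    rw [map_ofNat]
    noncomm_ring
  -- abbreviations for the scalars
  set α : A := (1 + MvPowerSeries.X 0) * (1 + MvPowerSeries.X 0) - 1 with hαdef
  set β : A := (1 + MvPowerSeries.X 1) * (1 + MvPowerSeries.X 1) - 1 with hβdef
  set σ : A := 2 * ((1 + MvPowerSeries.X 2) - (1 + MvPowerSeries.X 1) * (1 + MvPowerSeries.X 0))
    with hσdef
  -- smul helpers
  have hsmul : ∀ (s : A) (x : R), φ s * x = s • x := fun s x => (Algebra.smul_def s x).symm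
  have hsmul' : ∀ (s : A) (x : R), x * φ s = s • x := fun s x => by rw [← hcent, hsmul]
  have hφone : ∀ s : A, φ s = s • (1 : R) := fun s => by rw [← hsmul, mul_one]
  -- the two spans
  set M : Submodule A R := Submodule.span A ({1, u, v, u * v - v * u} : Set R) with hM
  set N : Submodule A R := Submodule.span A ({1, u, v, u * v} : Set R) with hN
  have h1N : (1 : R) ∈ N := Submodule.subset_span (by simp)
  have huN : u ∈ N := Submodule.subset_span (by simp)
  have hvN : v ∈ N := Submodule.subset_span (by simp)
  have huvN : u * v ∈ N := Submodule.subset_span (by simp)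
  have hφN : ∀ s : A, φ s ∈ N := fun s => by rw [hφone]; exact N.smul_mem s h1N
  have hmulφ : ∀ (s : A) (x : R), x ∈ N → φ s * x ∈ N := fun s x hx => by
    rw [hsmul]; exact N.smul_mem s hx
  have hmulφ' : ∀ (s : A) (x : R), x ∈ N → x * φ s ∈ N := fun s x hx => by
    rw [hsmul']; exact N.smul_mem s hx
  have hvu_eq : v * u = φ σ - u * v := by rw [← I3]; noncomm_ring
  have hvuN : v * u ∈ N := by rw [hvu_eq]; exact sub_mem (hφN _) huvN
  -- product identities
  have e_uuv : u * (u * v) = φ α * v := by rw [← mul_assoc, I1]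
  have e_uvu : (u * v) * u = u * φ σ - φ α * v := by
    rw [mul_assoc, hvu_eq, mul_sub, ← mul_assoc, I1]
  have e_vuv : v * (u * v) = φ σ * v - u * φ β := by
    rw [← mul_assoc, hvu_eq, sub_mul, mul_assoc, I2]
  have e_uvv : (u * v) * v = u * φ β := by rw [mul_assoc, I2]
  have e_uvuv : (u * v) * (u * v) = φ σ * u * v - φ α * φ β := by
    calc (u * v) * (u * v) = (u * (v * u)) * v := by noncomm_ring
    _ = (u * (φ σ - u * v)) * v := by rw [hvu_eq]
    _ = u * φ σ * v - (u * u) * (v * v) := by noncomm_ring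
    _ = φ σ * u * v - φ α * φ β := by rw [I1, I2, ← hcent σ u]
  -- N is closed under multiplication
  have hmulN : ∀ x ∈ N, ∀ y ∈ N, x * y ∈ N := by
    intro x hx y hy
    have h := Submodule.mul_mem_mul hx hy
    rw [hN, Submodule.span_mul_span] at h
    refine Submodule.span_le.mpr ?_ h
    rintro z hz
    rw [Set.mem_mul] at hz
    obtain ⟨a, ha, b, hb, rfl⟩ := hz
    simp only [Set.mem_insert_iff, Set.mem_singleton_iff] at ha hb
    simp only [SetLike.mem_coe]
    rcases ha with rfl | rfl | rfl | rfl <;> rcases hb with rfl | rfl | rfl | rfl <;>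
      (try simp only [one_mul, mul_one]) <;>
      first
      | exact h1N
      | exact huN
      | exact hvN
      | exact huvN
      | exact hvuN
      | (rw [I1]; exact hφN _)
      | (rw [I2]; exact hφN _)
      | (rw [e_uuv]; exact hmulφ _ _ hvN)
      | (rw [e_uvu]; exact sub_mem (hmulφ' _ _ huN) (hmulφ _ _ hvN))
      | (rw [e_vuv]; exact sub_mem (hmulφ _ _ hvN) (hmulφ' _ _ huN))
      | (rw [e_uvv]; exact hmulφ' _ _ huN)
      | (rw [e_uvuv]; exact sub_mem (by rw [mul_assoc]; exact hmulφ _ _ huvN)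
          (hmulφ' _ _ (hφN _)))
  -- the subring on N
  let T : Subring R :=
    { carrier := ↑N
      mul_mem' := fun {a b} ha hb => hmulN a ha b hb
      one_mem' := h1N
      add_mem' := fun {a b} ha hb => N.add_mem ha hb
      zero_mem' := N.zero_mem
      neg_mem' := fun {a} ha => N.neg_mem ha }
  have hsub : Subring.closure (Set.range ⇑φ ∪ {(γ : R), (δ : R)}) ≤ T := by
    rw [Subring.closure_le]
    rintro z (⟨s, rfl⟩ | hz)
    · exact hφN s
    · simp only [Set.mem_insert_iff, Set.mem_singleton_iff] at hz
      rcases hz with rfl | rfl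
      · show (γ : R) ∈ N
        have : (γ : R) = φ (1 + MvPowerSeries.X 0) + u := by rw [hφ0, hu']; noncomm_ring
        rw [this]; exact add_mem (hφN _) huN
      · show (δ : R) ∈ N
        have : (δ : R) = φ (1 + MvPowerSeries.X 1) + v := by rw [hφ1, hv']; noncomm_ring
        rw [this]; exact add_mem (hφN _) hvN
  -- N ≤ M
  have hφM : ∀ s : A, φ s ∈ M := fun s => by
    rw [hφone]; exact M.smul_mem s (Submodule.subset_span (by simp))
  have huvM : u * v ∈ M := by
    have h2uv : (2 : A) • (u * v) = φ σ + (u * v - v * u) := by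
      rw [Algebra.smul_def, map_ofNat, ← I3]; noncomm_ring
    have heq : u * v = k • (φ σ + (u * v - v * u)) := by
      rw [← h2uv, smul_smul, mul_comm k 2, hk, one_smul]
    rw [heq]
    exact M.smul_mem k (add_mem (hφM σ) (Submodule.subset_span (by simp)))
  have hNM : N ≤ M := by
    rw [hN]
    refine Submodule.span_le.mpr ?_
    rintro z hz
    simp only [Set.mem_insert_iff, Set.mem_singleton_iff] at hz
    rcases hz with rfl | rfl | rfl | rfl
    · exact Submodule.subset_span (by simp)
    · exact Submodule.subset_span (by simp)
    · exact Submodule.subset_span (by simp)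
    · exact huvM
  -- conclude via density and closedness
  intro x
  have hxM : x ∈ M := by
    have hx' := hdense x
    have hclsub : closure (↑(Subring.closure (Set.range ⇑φ ∪ {(γ : R), (δ : R)})) : Set R)
        ⊆ (↑M : Set R) :=
      hclosed.closure_subset_iff.mpr (fun z hz => hNM (hsub hz))
    exact hclsub hx'
  rw [hM, show ({1, u, v, u * v - v * u} : Set R)
      = insert 1 (insert u (insert v {u * v - v * u})) from rfl] at hxM
  rw [Submodule.mem_span_insert] at hxM
  obtain ⟨l₁, z₁, hz₁, rfl⟩ := hxM
  rw [Submodule.mem_span_insert] at hz₁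
  obtain ⟨l₂, z₂, hz₂, rfl⟩ := hz₁
  rw [Submodule.mem_span_insert] at hz₂
  obtain ⟨l₃, z₃, hz₃, rfl⟩ := hz₂
  rw [Submodule.mem_span_singleton] at hz₃
  obtain ⟨l₄, rfl⟩ := hz₃
  refine ⟨l₁, l₂, l₃, l₄, ?_⟩
  rw [hφone]
  simp only [add_assoc]
end

section
/- Let Z be the center O[[t_1,t_2,t_3]] of the algebra R (the pro-p Cayley–Hamilton algebra on two generators, p > 2), and let n be a maximal ideal of Z[1/p] such that the image of (uv−vu)^*(uv−vu) in Z[1/p]/n is zero, where * is the involution induced by g ↦ g^{-1}. Then the quotient R[1/p]/nR[1/p] has at most 2 non-isomorphic irreducible right modules, and each irreducible module is annihilated by the image θ of uv − vu. -/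
open scoped TensorProduct

set_option synthInstance.maxHeartbeats 1000000
set_option maxHeartbeats 2000000

private lemma stmt18_quadRoots {K : Type} [Field K] {x y z g : K}
    (hx : x * x = g) (hy : y * y = g) (hz : z * z = g) :
    x = y ∨ x = z ∨ y = z := by
  by_contra h
  push_neg at h
  obtain ⟨h1, h2, h3⟩ := h
  have key : ∀ a b : K, a * a = g → b * b = g → a ≠ b → b = -a := by
    intro a b ha hb hab
    have : (a - b) * (a + b) = 0 := by linear_combination ha - hb
    rcases mul_eq_zero.mp this with h' | h'
    · exact absurd (sub_eq_zero.mp h') hab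
    · linear_combination h'
  have e1 := key x y hx hy h1
  have e2 := key x z hx hz h2
  exact h3 (e1.trans e2.symm)

private lemma stmt18_kerEqIso {S M N : Type} [Ring S] [AddCommGroup M] [AddCommGroup N]
    [Module S M] [Module S N] {m : M} {n : N}
    (hm : Function.Surjective (LinearMap.toSpanSingleton S M m))
    (hn : Function.Surjective (LinearMap.toSpanSingleton S N n))
    (h : LinearMap.ker (LinearMap.toSpanSingleton S M m)
        = LinearMap.ker (LinearMap.toSpanSingleton S N n)) :
    Nonempty (M ≃ₗ[S] N) :=
  ⟨(LinearMap.quotKerEquivOfSurjective _ hm).symm ≪≫ₗ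
    (Submodule.quotEquivOfEq _ _ h) ≪≫ₗ (LinearMap.quotKerEquivOfSurjective _ hn)⟩

private lemma stmt18_two_of_three {K S : Type} [Field K] [Ring S] (ι : K →+* S)
    (hcent : ∀ (k : K) (s : S), ι k * s = s * ι k)
    (hunit : ∀ k : K, k ≠ 0 → IsUnit (ι k))
    (T : S) (g : K) (hT : T * T = ι g)
    (hact : ∀ s : S, ∃ c d : K, ∀ (M : Type) [AddCommGroup M] [Module S M],
      IsSimpleModule S M → ∀ x : M, s • x = ι c • x + ι d • (T • x))
    (M₁ M₂ M₃ : Type) [AddCommGroup M₁] [AddCommGroup M₂] [AddCommGroup M₃]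
    [Module S M₁] [Module S M₂] [Module S M₃]
    (h₁ : IsSimpleModule S M₁) (h₂ : IsSimpleModule S M₂) (h₃ : IsSimpleModule S M₃) :
    Nonempty (M₁ ≃ₗ[S] M₂) ∨ Nonempty (M₁ ≃ₗ[S] M₃) ∨ Nonempty (M₂ ≃ₗ[S] M₃) := by
  classical
  -- basic scalar manipulation lemmas
  have hcanc : ∀ (M : Type) [AddCommGroup M] [Module S M] (k : K) (x : M),
      k ≠ 0 → ι k • x = 0 → x = 0 := by
    intro M _ _ k x hk h0
    obtain ⟨w, hw⟩ := hunit k hk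
    have h1 : ((w⁻¹ : Sˣ) : S) • ((w : S) • x) = 0 := by rw [hw, h0, smul_zero]
    rwa [smul_smul, Units.inv_mul, one_smul] at h1
  -- T commutes with every scalar action and with itself
  have hTT : ∀ (M : Type) [AddCommGroup M] [Module S M] (x : M),
      T • (T • x) = ι g • x := by
    intro M _ _ x; rw [smul_smul, hT]
  have hTι : ∀ (M : Type) [AddCommGroup M] [Module S M] (k : K) (x : M),
      T • (ι k • x) = ι k • (T • x) := by
    intro M _ _ k x; rw [smul_smul, ← hcent k T, ← smul_smul]
  have hcomm : ∀ (M : Type) [AddCommGroup M] [Module S M] (hM : IsSimpleModule S M)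
      (s : S) (x : M), T • (s • x) = s • (T • x) := by
    intro M _ _ hM s x
    obtain ⟨c, d, hcd⟩ := hact s
    rw [hcd M hM x, hcd M hM (T • x), smul_add, hTι, hTι, hTT]
  by_cases hsq : ∃ e : K, e * e = g
  · obtain ⟨e, he⟩ := hsq
    -- every simple module has T acting as a scalar λ with λ * λ = g
    have hscal : ∀ (M : Type) [AddCommGroup M] [Module S M], IsSimpleModule S M →
        ∃ lam : K, lam * lam = g ∧ ∀ x : M, T • x = ι lam • x := by
      intro M _ _ hM
      haveI := hM
      let W : Submodule S M :=
        { carrier := {x | T • x = ι e • x}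
          add_mem' := by
            intro x y hx hy
            simp only [Set.mem_setOf_eq] at *
            rw [smul_add, smul_add, hx, hy]
          zero_mem' := by simp
          smul_mem' := by
            intro s x hx
            simp only [Set.mem_setOf_eq] at *
            rw [hcomm M hM s x, hx, smul_smul, ← hcent e s, mul_smul] }
      rcases eq_bot_or_eq_top W with hW | hW
      · refine ⟨-e, by rw [neg_mul_neg]; exact he, ?_⟩
        intro x
        have hmem : T • x + ι e • x ∈ W := by
          show T • (T • x + ι e • x) = ι e • (T • x + ι e • x)
          rw [smul_add, smul_add, hTT M x, hTι M e x, smul_smul (ι e) (ι e) x,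
            ← map_mul, he]
          exact add_comm _ _
        rw [hW, Submodule.mem_bot] at hmem
        have : T • x = -(ι e • x) := by
          rw [← sub_eq_zero]; rw [sub_neg_eq_add]; exact hmem
        rw [this, map_neg, neg_smul]
      · refine ⟨e, he, ?_⟩
        intro x
        have : x ∈ W := by rw [hW]; trivial
        exact this
    obtain ⟨l₁, hl₁, hTl₁⟩ := hscal M₁ h₁
    obtain ⟨l₂, hl₂, hTl₂⟩ := hscal M₂ h₂
    obtain ⟨l₃, hl₃, hTl₃⟩ := hscal M₃ h₃
    -- kernels agree when scalars agree
    have kerle : ∀ (lam : K) (M N : Type) [AddCommGroup M] [AddCommGroup N]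
        [Module S M] [Module S N], IsSimpleModule S M → IsSimpleModule S N →
        ∀ (m : M) (n : N), m ≠ 0 →
        (∀ x : M, T • x = ι lam • x) → (∀ y : N, T • y = ι lam • y) →
        LinearMap.ker (LinearMap.toSpanSingleton S M m)
          ≤ LinearMap.ker (LinearMap.toSpanSingleton S N n) := by
      intro lam M N _ _ _ _ hM hN m n hm hTM hTN
      intro s hs
      rw [LinearMap.mem_ker, LinearMap.toSpanSingleton_apply] at hs
      obtain ⟨c, d, hcd⟩ := hact s
      have hsm : s • m = ι (c + d * lam) • m := by
        rw [hcd M hM m, hTM m, smul_smul, ← map_mul, map_add, add_smul]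
      have hc0 : c + d * lam = 0 := by
        by_contra hne
        exact hm (hcanc M _ m hne (by rw [← hsm, hs]))
      rw [LinearMap.mem_ker, LinearMap.toSpanSingleton_apply]
      rw [hcd N hN n, hTN n, smul_smul, ← map_mul, ← add_smul, ← map_add, hc0, map_zero,
        zero_smul]
    -- pick nonzero elements
    haveI := h₁; haveI := h₂; haveI := h₃
    have hnt₁ := h₁.nontrivial
    have hnt₂ := h₂.nontrivial
    have hnt₃ := h₃.nontrivial
    obtain ⟨m₁, hm₁⟩ := exists_ne (0 : M₁)
    obtain ⟨m₂, hm₂⟩ := exists_ne (0 : M₂)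
    obtain ⟨m₃, hm₃⟩ := exists_ne (0 : M₃)
    have hs₁ := IsSimpleModule.toSpanSingleton_surjective S hm₁
    have hs₂ := IsSimpleModule.toSpanSingleton_surjective S hm₂
    have hs₃ := IsSimpleModule.toSpanSingleton_surjective S hm₃
    rcases stmt18_quadRoots hl₁ hl₂ hl₃ with hll | hll | hll
    · exact Or.inl (stmt18_kerEqIso hs₁ hs₂ (le_antisymm
        (kerle l₁ M₁ M₂ h₁ h₂ m₁ m₂ hm₁ hTl₁ (hll ▸ hTl₂))
        (kerle l₁ M₂ M₁ h₂ h₁ m₂ m₁ hm₂ (hll ▸ hTl₂) hTl₁)))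
    · exact Or.inr (Or.inl (stmt18_kerEqIso hs₁ hs₃ (le_antisymm
        (kerle l₁ M₁ M₃ h₁ h₃ m₁ m₃ hm₁ hTl₁ (hll ▸ hTl₃))
        (kerle l₁ M₃ M₁ h₃ h₁ m₃ m₁ hm₃ (hll ▸ hTl₃) hTl₁))))
    · exact Or.inr (Or.inr (stmt18_kerEqIso hs₂ hs₃ (le_antisymm
        (kerle l₂ M₂ M₃ h₂ h₃ m₂ m₃ hm₂ hTl₂ (hll ▸ hTl₃))
        (kerle l₂ M₃ M₂ h₃ h₂ m₃ m₂ hm₃ (hll ▸ hTl₃) hTl₂))))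
  · -- g is not a square : all kernels are equal
    have kerle : ∀ (M N : Type) [AddCommGroup M] [AddCommGroup N]
        [Module S M] [Module S N], IsSimpleModule S M → IsSimpleModule S N →
        ∀ (m : M) (n : N), m ≠ 0 →
        LinearMap.ker (LinearMap.toSpanSingleton S M m)
          ≤ LinearMap.ker (LinearMap.toSpanSingleton S N n) := by
      intro M N _ _ _ _ hM hN m n hm
      intro s hs
      rw [LinearMap.mem_ker, LinearMap.toSpanSingleton_apply] at hs
      obtain ⟨c, d, hcd⟩ := hact s
      have hsm : ι c • m + ι d • (T • m) = 0 := by rw [← hcd M hM m, hs]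
      have hd : d = 0 := by
        by_contra hd0
        have hTm : T • m = ι (d⁻¹ * -c) • m := by
          have h1 : ι d • (T • m) = ι (-c) • m := by
            rw [map_neg, neg_smul]
            rw [add_comm] at hsm
            exact eq_neg_of_add_eq_zero_left hsm
          calc T • m = ι d⁻¹ • (ι d • (T • m)) := by
                rw [smul_smul, ← map_mul, inv_mul_cancel₀ hd0, map_one, one_smul]
            _ = ι d⁻¹ • (ι (-c) • m) := by rw [h1]
            _ = ι (d⁻¹ * -c) • m := by rw [smul_smul, ← map_mul]
        have hgm : ι (g - (d⁻¹ * -c) * (d⁻¹ * -c)) • m = 0 := by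
          have h3 : T • (T • m) = ι ((d⁻¹ * -c) * (d⁻¹ * -c)) • m := by
            rw [hTm, hTι, hTm, smul_smul, ← map_mul]
          rw [map_sub, sub_smul, ← hTT M m, h3, sub_self]
        have : g - (d⁻¹ * -c) * (d⁻¹ * -c) = 0 := by
          by_contra hne
          exact hm (hcanc M _ m hne hgm)
        exact hsq ⟨d⁻¹ * -c, by linear_combination -this⟩
      have hc : c = 0 := by
        rw [hd, map_zero, zero_smul, add_zero] at hsm
        by_contra hne
        exact hm (hcanc M _ m hne hsm)
      rw [LinearMap.mem_ker, LinearMap.toSpanSingleton_apply, hcd N hN n, hc, hd]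
      simp
    haveI := h₁; haveI := h₂
    have hnt₁ := h₁.nontrivial
    have hnt₂ := h₂.nontrivial
    obtain ⟨m₁, hm₁⟩ := exists_ne (0 : M₁)
    obtain ⟨m₂, hm₂⟩ := exists_ne (0 : M₂)
    exact Or.inl (stmt18_kerEqIso (IsSimpleModule.toSpanSingleton_surjective S hm₁)
      (IsSimpleModule.toSpanSingleton_surjective S hm₂)
      (le_antisymm (kerle M₁ M₂ h₁ h₂ m₁ m₂ hm₁) (kerle M₂ M₁ h₂ h₁ m₂ m₁ hm₂)))

private theorem stmt18_aux {Z : Type} [CommRing Z] {R : Type} [Ring R] [Invertible (2 : R)]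
    [Algebra Z R]
    (hcent : ∀ (a : Z) (x : R), algebraMap Z R a * x = x * algebraMap Z R a)
    {K : Type} [Field K] [Algebra Z K]
    (γ δ : Rˣ) (s₀ s₁ s₂ : Z)
    (hγ : (γ : R) ^ 2 - 2 * algebraMap Z R s₀ * γ + 1 = 0)
    (hδ : (δ : R) ^ 2 - 2 * algebraMap Z R s₁ * δ + 1 = 0)
    (hγδ : ((γ : R) * δ) ^ 2 - 2 * algebraMap Z R s₂ * ((γ : R) * δ) + 1 = 0)
    (u v : R)
    (hu : u = ⅟(2 : R) * ((γ : R) - (γ⁻¹ : Rˣ)))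
    (hv : v = ⅟(2 : R) * ((δ : R) - (δ⁻¹ : Rˣ)))
    (h2K : (2 : K) ≠ 0)
    (b : Module.Basis (Fin 4) Z R)
    (hb0 : b 0 = 1) (hb1 : b 1 = u) (hb2 : b 2 = v) (hb3 : b 3 = u * v - v * u)
    (z : Z) (hz : algebraMap Z R z = -((u * v - v * u) ^ 2))
    (hzn : algebraMap Z K z = 0) :
    (∀ (M₁ M₂ M₃ : Type) [AddCommGroup M₁] [AddCommGroup M₂] [AddCommGroup M₃]
      [Module (K ⊗[Z] R)ᵐᵒᵖ M₁] [Module (K ⊗[Z] R)ᵐᵒᵖ M₂] [Module (K ⊗[Z] R)ᵐᵒᵖ M₃],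
      IsSimpleModule (K ⊗[Z] R)ᵐᵒᵖ M₁ → IsSimpleModule (K ⊗[Z] R)ᵐᵒᵖ M₂ →
      IsSimpleModule (K ⊗[Z] R)ᵐᵒᵖ M₃ →
      (Nonempty (M₁ ≃ₗ[(K ⊗[Z] R)ᵐᵒᵖ] M₂) ∨ Nonempty (M₁ ≃ₗ[(K ⊗[Z] R)ᵐᵒᵖ] M₃) ∨
        Nonempty (M₂ ≃ₗ[(K ⊗[Z] R)ᵐᵒᵖ] M₃))) ∧
    (∀ (M : Type) [AddCommGroup M] [Module (K ⊗[Z] R)ᵐᵒᵖ M],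
      IsSimpleModule (K ⊗[Z] R)ᵐᵒᵖ M →
      ∀ m : M, (MulOpposite.op ((1 : K) ⊗ₜ[Z] (u * v - v * u))) • m = 0) := by
  classical
  -- Step 1 : ring identities in R
  have hγ2 : (γ : R) ^ 2 = 2 * algebraMap Z R s₀ * γ - 1 := by
    apply eq_of_sub_eq_zero
    calc (γ : R) ^ 2 - (2 * algebraMap Z R s₀ * γ - 1)
        = (γ : R) ^ 2 - 2 * algebraMap Z R s₀ * γ + 1 := by noncomm_ring
      _ = 0 := hγ
  have hδ2 : (δ : R) ^ 2 = 2 * algebraMap Z R s₁ * δ - 1 := by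
    apply eq_of_sub_eq_zero
    calc (δ : R) ^ 2 - (2 * algebraMap Z R s₁ * δ - 1)
        = (δ : R) ^ 2 - 2 * algebraMap Z R s₁ * δ + 1 := by noncomm_ring
      _ = 0 := hδ
  have hγδ2 : ((γ : R) * δ) ^ 2 = 2 * algebraMap Z R s₂ * ((γ : R) * δ) - 1 := by
    apply eq_of_sub_eq_zero
    calc ((γ : R) * δ) ^ 2 - (2 * algebraMap Z R s₂ * ((γ : R) * δ) - 1)
        = ((γ : R) * δ) ^ 2 - 2 * algebraMap Z R s₂ * ((γ : R) * δ) + 1 := by noncomm_ring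
      _ = 0 := hγδ
  have hγinv : ((γ⁻¹ : Rˣ) : R) = 2 * algebraMap Z R s₀ - γ := by
    apply Units.inv_eq_of_mul_eq_one_right
    calc (γ : R) * (2 * algebraMap Z R s₀ - γ)
        = 2 * ((γ : R) * algebraMap Z R s₀) - (γ : R) ^ 2 := by noncomm_ring
      _ = 2 * (algebraMap Z R s₀ * γ) - (2 * algebraMap Z R s₀ * γ - 1) := by
          rw [← hcent s₀ (γ : R), hγ2]
      _ = 1 := by noncomm_ring
  have hδinv : ((δ⁻¹ : Rˣ) : R) = 2 * algebraMap Z R s₁ - δ := by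
    apply Units.inv_eq_of_mul_eq_one_right
    calc (δ : R) * (2 * algebraMap Z R s₁ - δ)
        = 2 * ((δ : R) * algebraMap Z R s₁) - (δ : R) ^ 2 := by noncomm_ring
      _ = 2 * (algebraMap Z R s₁ * δ) - (2 * algebraMap Z R s₁ * δ - 1) := by
          rw [← hcent s₁ (δ : R), hδ2]
      _ = 1 := by noncomm_ring
  have hγδinv : (((γ * δ)⁻¹ : Rˣ) : R) = 2 * algebraMap Z R s₂ - (γ : R) * δ := by
    apply Units.inv_eq_of_mul_eq_one_right
    rw [Units.val_mul]
    calc (γ : R) * δ * (2 * algebraMap Z R s₂ - (γ : R) * δ)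
        = 2 * (((γ : R) * δ) * algebraMap Z R s₂) - ((γ : R) * δ) ^ 2 := by noncomm_ring
      _ = 2 * (algebraMap Z R s₂ * ((γ : R) * δ))
            - (2 * algebraMap Z R s₂ * ((γ : R) * δ) - 1) := by
          rw [← hcent s₂ ((γ : R) * δ), hγδ2]
      _ = 1 := by noncomm_ring
  have hu' : u = (γ : R) - algebraMap Z R s₀ := by
    rw [hu, hγinv]
    calc ⅟(2 : R) * ((γ : R) - (2 * algebraMap Z R s₀ - γ))
        = ⅟(2 : R) * (2 * ((γ : R) - algebraMap Z R s₀)) := by noncomm_ring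
      _ = (⅟(2 : R) * 2) * ((γ : R) - algebraMap Z R s₀) := by rw [mul_assoc]
      _ = (γ : R) - algebraMap Z R s₀ := by rw [invOf_mul_self, one_mul]
  have hv' : v = (δ : R) - algebraMap Z R s₁ := by
    rw [hv, hδinv]
    calc ⅟(2 : R) * ((δ : R) - (2 * algebraMap Z R s₁ - δ))
        = ⅟(2 : R) * (2 * ((δ : R) - algebraMap Z R s₁)) := by noncomm_ring
      _ = (⅟(2 : R) * 2) * ((δ : R) - algebraMap Z R s₁) := by rw [mul_assoc]
      _ = (δ : R) - algebraMap Z R s₁ := by rw [invOf_mul_self, one_mul]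
  have huu : u * u = algebraMap Z R (s₀ * s₀ - 1) := by
    rw [hu', map_sub, map_one, map_mul]
    calc ((γ : R) - algebraMap Z R s₀) * ((γ : R) - algebraMap Z R s₀)
        = (γ : R) ^ 2 - (γ : R) * algebraMap Z R s₀ - algebraMap Z R s₀ * γ
            + algebraMap Z R s₀ * algebraMap Z R s₀ := by noncomm_ring
      _ = (2 * algebraMap Z R s₀ * γ - 1) - algebraMap Z R s₀ * γ - algebraMap Z R s₀ * γ
            + algebraMap Z R s₀ * algebraMap Z R s₀ := by rw [hγ2, ← hcent s₀ (γ : R)]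
      _ = algebraMap Z R s₀ * algebraMap Z R s₀ - 1 := by noncomm_ring
  have hvv : v * v = algebraMap Z R (s₁ * s₁ - 1) := by
    rw [hv', map_sub, map_one, map_mul]
    calc ((δ : R) - algebraMap Z R s₁) * ((δ : R) - algebraMap Z R s₁)
        = (δ : R) ^ 2 - (δ : R) * algebraMap Z R s₁ - algebraMap Z R s₁ * δ
            + algebraMap Z R s₁ * algebraMap Z R s₁ := by noncomm_ring
      _ = (2 * algebraMap Z R s₁ * δ - 1) - algebraMap Z R s₁ * δ - algebraMap Z R s₁ * δ
            + algebraMap Z R s₁ * algebraMap Z R s₁ := by rw [hδ2, ← hcent s₁ (δ : R)]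
      _ = algebraMap Z R s₁ * algebraMap Z R s₁ - 1 := by noncomm_ring
  have hkey : (2 * algebraMap Z R s₁ - δ) * (2 * algebraMap Z R s₀ - γ)
      = 2 * algebraMap Z R s₂ - (γ : R) * δ := by
    calc (2 * algebraMap Z R s₁ - δ) * (2 * algebraMap Z R s₀ - γ)
        = ((δ⁻¹ : Rˣ) : R) * ((γ⁻¹ : Rˣ) : R) := by rw [hδinv, hγinv]
      _ = (((γ * δ)⁻¹ : Rˣ) : R) := by rw [mul_inv_rev, Units.val_mul]
      _ = 2 * algebraMap Z R s₂ - (γ : R) * δ := hγδinv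
  have hδγ' : (δ : R) * γ = 2 * algebraMap Z R s₂ - (γ : R) * δ
      - 4 * (algebraMap Z R s₁ * algebraMap Z R s₀) + 2 * (algebraMap Z R s₁ * γ)
      + 2 * (algebraMap Z R s₀ * δ) := by
    have hexp : (2 * algebraMap Z R s₁ - δ) * (2 * algebraMap Z R s₀ - γ)
        = 4 * (algebraMap Z R s₁ * algebraMap Z R s₀) - 2 * (algebraMap Z R s₁ * γ)
          - 2 * (algebraMap Z R s₀ * δ) + (δ : R) * γ := by
      calc (2 * algebraMap Z R s₁ - δ) * (2 * algebraMap Z R s₀ - γ)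
          = 4 * (algebraMap Z R s₁ * algebraMap Z R s₀) - 2 * (algebraMap Z R s₁ * γ)
            - 2 * ((δ : R) * algebraMap Z R s₀) + (δ : R) * γ := by noncomm_ring
        _ = _ := by rw [← hcent s₀ (δ : R)]
    have h := hexp.symm.trans hkey
    apply eq_of_sub_eq_zero
    calc (δ : R) * γ - (2 * algebraMap Z R s₂ - (γ : R) * δ
          - 4 * (algebraMap Z R s₁ * algebraMap Z R s₀) + 2 * (algebraMap Z R s₁ * γ)
          + 2 * (algebraMap Z R s₀ * δ))
        = (4 * (algebraMap Z R s₁ * algebraMap Z R s₀) - 2 * (algebraMap Z R s₁ * γ)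
            - 2 * (algebraMap Z R s₀ * δ) + (δ : R) * γ)
          - (2 * algebraMap Z R s₂ - (γ : R) * δ) := by noncomm_ring
      _ = 0 := by rw [h, sub_self]
  have huv : u * v + v * u = 2 * algebraMap Z R (s₂ - s₀ * s₁) := by
    have hσσ : algebraMap Z R s₁ * algebraMap Z R s₀ = algebraMap Z R s₀ * algebraMap Z R s₁ :=
      hcent s₁ (algebraMap Z R s₀)
    rw [hu', hv', map_sub, map_mul]
    calc ((γ : R) - algebraMap Z R s₀) * ((δ : R) - algebraMap Z R s₁)
          + ((δ : R) - algebraMap Z R s₁) * ((γ : R) - algebraMap Z R s₀)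
        = (γ : R) * δ + (δ : R) * γ - (γ : R) * algebraMap Z R s₁
            - algebraMap Z R s₀ * δ - (δ : R) * algebraMap Z R s₀ - algebraMap Z R s₁ * γ
            + algebraMap Z R s₀ * algebraMap Z R s₁
            + algebraMap Z R s₁ * algebraMap Z R s₀ := by noncomm_ring
      _ = (γ : R) * δ + (δ : R) * γ - algebraMap Z R s₁ * γ
            - algebraMap Z R s₀ * δ - algebraMap Z R s₀ * δ - algebraMap Z R s₁ * γ
            + algebraMap Z R s₀ * algebraMap Z R s₁
            + algebraMap Z R s₁ * algebraMap Z R s₀ := by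
          rw [← hcent s₁ (γ : R), ← hcent s₀ (δ : R)]
      _ = _ := by rw [hδγ', hσσ]; noncomm_ring
  -- derived relations for θ = u*v - v*u
  have huv' : u * v = 2 * algebraMap Z R (s₂ - s₀ * s₁) - v * u := eq_sub_of_add_eq huv
  have hvu' : v * u = 2 * algebraMap Z R (s₂ - s₀ * s₁) - u * v :=
    eq_sub_of_add_eq (by rw [add_comm]; exact huv)
  have huθ : u * (u * v - v * u) = algebraMap Z R (2 * (s₀ * s₀ - 1)) * v
      - algebraMap Z R (2 * (s₂ - s₀ * s₁)) * u := by
    rw [map_mul, map_mul, map_ofNat]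
    calc u * (u * v - v * u) = (u * u) * v - (u * v) * u := by noncomm_ring
      _ = algebraMap Z R (s₀ * s₀ - 1) * v
            - (2 * algebraMap Z R (s₂ - s₀ * s₁) - v * u) * u := by rw [huu, huv']
      _ = algebraMap Z R (s₀ * s₀ - 1) * v - 2 * (algebraMap Z R (s₂ - s₀ * s₁) * u)
            + v * (u * u) := by noncomm_ring
      _ = algebraMap Z R (s₀ * s₀ - 1) * v - 2 * (algebraMap Z R (s₂ - s₀ * s₁) * u)
            + v * algebraMap Z R (s₀ * s₀ - 1) := by rw [huu]
      _ = _ := by rw [← hcent (s₀ * s₀ - 1) v]; noncomm_ring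
  have hvθ : v * (u * v - v * u) = algebraMap Z R (2 * (s₂ - s₀ * s₁)) * v
      - algebraMap Z R (2 * (s₁ * s₁ - 1)) * u := by
    rw [map_mul, map_mul, map_ofNat]
    calc v * (u * v - v * u) = (v * u) * v - (v * v) * u := by noncomm_ring
      _ = (2 * algebraMap Z R (s₂ - s₀ * s₁) - u * v) * v
            - algebraMap Z R (s₁ * s₁ - 1) * u := by rw [hvu', hvv]
      _ = 2 * (algebraMap Z R (s₂ - s₀ * s₁) * v) - u * (v * v)
            - algebraMap Z R (s₁ * s₁ - 1) * u := by noncomm_ring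
      _ = 2 * (algebraMap Z R (s₂ - s₀ * s₁) * v) - u * algebraMap Z R (s₁ * s₁ - 1)
            - algebraMap Z R (s₁ * s₁ - 1) * u := by rw [hvv]
      _ = _ := by rw [← hcent (s₁ * s₁ - 1) u]; noncomm_ring
  have hθu : (u * v - v * u) * u = -(u * (u * v - v * u)) := by
    apply eq_neg_of_add_eq_zero_left
    calc (u * v - v * u) * u + u * (u * v - v * u) = (u * u) * v - v * (u * u) := by noncomm_ring
      _ = algebraMap Z R (s₀ * s₀ - 1) * v - v * algebraMap Z R (s₀ * s₀ - 1) := by rw [huu]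
      _ = 0 := by rw [← hcent (s₀ * s₀ - 1) v, sub_self]
  have hθv : (u * v - v * u) * v = -(v * (u * v - v * u)) := by
    apply eq_neg_of_add_eq_zero_left
    calc (u * v - v * u) * v + v * (u * v - v * u) = u * (v * v) - (v * v) * u := by noncomm_ring
      _ = u * algebraMap Z R (s₁ * s₁ - 1) - algebraMap Z R (s₁ * s₁ - 1) * u := by rw [hvv]
      _ = 0 := by rw [← hcent (s₁ * s₁ - 1) u, sub_self]
  have hθθ : (u * v - v * u) * (u * v - v * u)
      = algebraMap Z R (4 * ((s₂ - s₀ * s₁) * (s₂ - s₀ * s₁)) - 4 * ((s₀ * s₀ - 1) * (s₁ * s₁ - 1))) := by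
    have h2m : u * v + v * u = 2 * algebraMap Z R (s₂ - s₀ * s₁) := huv
    calc (u * v - v * u) * (u * v - v * u)
        = u * (v * (u * v - v * u)) - v * (u * (u * v - v * u)) := by noncomm_ring
      _ = u * (algebraMap Z R (2 * (s₂ - s₀ * s₁)) * v - algebraMap Z R (2 * (s₁ * s₁ - 1)) * u)
          - v * (algebraMap Z R (2 * (s₀ * s₀ - 1)) * v
            - algebraMap Z R (2 * (s₂ - s₀ * s₁)) * u) := by rw [hvθ, huθ]
      _ = (u * algebraMap Z R (2 * (s₂ - s₀ * s₁))) * v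
          - (u * algebraMap Z R (2 * (s₁ * s₁ - 1))) * u
          - (v * algebraMap Z R (2 * (s₀ * s₀ - 1))) * v
          + (v * algebraMap Z R (2 * (s₂ - s₀ * s₁))) * u := by noncomm_ring
      _ = (algebraMap Z R (2 * (s₂ - s₀ * s₁)) * u) * v
          - (algebraMap Z R (2 * (s₁ * s₁ - 1)) * u) * u
          - (algebraMap Z R (2 * (s₀ * s₀ - 1)) * v) * v
          + (algebraMap Z R (2 * (s₂ - s₀ * s₁)) * v) * u := by
            rw [← hcent (2 * (s₂ - s₀ * s₁)) u, ← hcent (2 * (s₁ * s₁ - 1)) u,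
              ← hcent (2 * (s₀ * s₀ - 1)) v, ← hcent (2 * (s₂ - s₀ * s₁)) v]
      _ = algebraMap Z R (2 * (s₂ - s₀ * s₁)) * (u * v + v * u)
          - algebraMap Z R (2 * (s₁ * s₁ - 1)) * (u * u)
          - algebraMap Z R (2 * (s₀ * s₀ - 1)) * (v * v) := by noncomm_ring
      _ = algebraMap Z R (2 * (s₂ - s₀ * s₁)) * (2 * algebraMap Z R (s₂ - s₀ * s₁))
          - algebraMap Z R (2 * (s₁ * s₁ - 1)) * algebraMap Z R (s₀ * s₀ - 1)
          - algebraMap Z R (2 * (s₀ * s₀ - 1)) * algebraMap Z R (s₁ * s₁ - 1) := by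
            rw [h2m, huu, hvv]
      _ = _ := by
            rw [hcent (2 * (s₁ * s₁ - 1)) (algebraMap Z R (s₀ * s₀ - 1))]
            simp only [map_sub, map_mul, map_ofNat]
            noncomm_ring
  -- Step 2 : consequences in K
  have hinj : Function.Injective (algebraMap Z R) := by
    intro x y hxy
    have h1 : x • b 0 = y • b 0 := by
      rw [hb0]
      rw [← Algebra.algebraMap_eq_smul_one, ← Algebra.algebraMap_eq_smul_one, hxy]
    have h2 := congrArg (fun w => b.repr w 0) h1
    simpa using h2
  have hzw : z = -(4 * ((s₂ - s₀ * s₁) * (s₂ - s₀ * s₁)) - 4 * ((s₀ * s₀ - 1) * (s₁ * s₁ - 1))) := by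
    apply hinj
    rw [hz, map_neg, ← hθθ, pow_two]
  have hwK : algebraMap Z K (4 * ((s₂ - s₀ * s₁) * (s₂ - s₀ * s₁))
      - 4 * ((s₀ * s₀ - 1) * (s₁ * s₁ - 1))) = 0 := by
    have := hzn
    rw [hzw, map_neg, neg_eq_zero] at this
    exact this
  have h4K : (4 : K) ≠ 0 := by
    have h := mul_ne_zero h2K h2K
    norm_num at h
    exact h
  have hm2K : algebraMap Z K (s₂ - s₀ * s₁) * algebraMap Z K (s₂ - s₀ * s₁)
      = algebraMap Z K (s₀ * s₀ - 1) * algebraMap Z K (s₁ * s₁ - 1) := by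
    have h := hwK
    rw [map_sub] at h
    have h2 := sub_eq_zero.mp h
    rw [map_mul, map_mul, map_mul, map_mul, map_ofNat] at h2
    exact mul_left_cancel₀ h4K h2
  -- Step 3 : facts in A = K ⊗[Z] R
  have one_tmul_mul : ∀ x y : R,
      (1 : K) ⊗ₜ[Z] (x * y) = ((1 : K) ⊗ₜ[Z] x) * ((1 : K) ⊗ₜ[Z] y) := fun x y => by
    rw [Algebra.TensorProduct.tmul_mul_tmul, one_mul]
  have tmul_alg : ∀ (w : Z) (x : R),
      (1 : K) ⊗ₜ[Z] (algebraMap Z R w * x) = algebraMap Z K w • ((1 : K) ⊗ₜ[Z] x) := by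
    intro w x
    rw [← Algebra.smul_def, TensorProduct.tmul_smul,
      ← algebraMap_smul K w ((1 : K) ⊗ₜ[Z] x)]
  have tmul_algone : ∀ w : Z,
      (1 : K) ⊗ₜ[Z] (algebraMap Z R w) = algebraMap Z K w • (1 : K ⊗[Z] R) := by
    intro w
    rw [← mul_one (algebraMap Z R w), tmul_alg, ← Algebra.TensorProduct.one_def]
  have hAθθ : ((1 : K) ⊗ₜ[Z] (u * v - v * u)) * ((1 : K) ⊗ₜ[Z] (u * v - v * u))
      = (0 : K ⊗[Z] R) := by
    rw [← one_tmul_mul, hθθ, tmul_algone, hwK, zero_smul]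
  have hAθu : ((1 : K) ⊗ₜ[Z] (u * v - v * u)) * ((1 : K) ⊗ₜ[Z] u)
      = -(((1 : K) ⊗ₜ[Z] u) * ((1 : K) ⊗ₜ[Z] (u * v - v * u))) := by
    rw [← one_tmul_mul, ← one_tmul_mul, hθu, TensorProduct.tmul_neg]
  have hAθv : ((1 : K) ⊗ₜ[Z] (u * v - v * u)) * ((1 : K) ⊗ₜ[Z] v)
      = -(((1 : K) ⊗ₜ[Z] v) * ((1 : K) ⊗ₜ[Z] (u * v - v * u))) := by
    rw [← one_tmul_mul, ← one_tmul_mul, hθv, TensorProduct.tmul_neg]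
  have t0 : ((1 : K) ⊗ₜ[Z] (u * v - v * u)) * ((1 : K) ⊗ₜ[Z] (1 : R))
      * ((1 : K) ⊗ₜ[Z] (u * v - v * u)) = 0 := by
    rw [← Algebra.TensorProduct.one_def, mul_one, hAθθ]
  have t1 : ((1 : K) ⊗ₜ[Z] (u * v - v * u)) * ((1 : K) ⊗ₜ[Z] u)
      * ((1 : K) ⊗ₜ[Z] (u * v - v * u)) = 0 := by
    rw [hAθu, neg_mul, mul_assoc, hAθθ, mul_zero, neg_zero]
  have t2 : ((1 : K) ⊗ₜ[Z] (u * v - v * u)) * ((1 : K) ⊗ₜ[Z] v)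
      * ((1 : K) ⊗ₜ[Z] (u * v - v * u)) = 0 := by
    rw [hAθv, neg_mul, mul_assoc, hAθθ, mul_zero, neg_zero]
  have t3 : ((1 : K) ⊗ₜ[Z] (u * v - v * u)) * ((1 : K) ⊗ₜ[Z] (u * v - v * u))
      * ((1 : K) ⊗ₜ[Z] (u * v - v * u)) = 0 := by
    rw [hAθθ, zero_mul]
  have keyA : ∀ x : K ⊗[Z] R,
      ((1 : K) ⊗ₜ[Z] (u * v - v * u)) * x * ((1 : K) ⊗ₜ[Z] (u * v - v * u)) = 0 := by
    intro x
    have hx := Module.Basis.sum_repr (b.baseChange K) x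
    rw [← hx, Fin.sum_univ_four, Module.Basis.baseChange_apply, Module.Basis.baseChange_apply,
      Module.Basis.baseChange_apply, Module.Basis.baseChange_apply, hb0, hb1, hb2, hb3]
    simp only [mul_add, add_mul, mul_smul_comm, smul_mul_assoc, t0, t1, t2, t3,
      smul_zero, add_zero]
  -- Step 4 : the opposite algebra S
  have hΘkill : ∀ (M : Type) [AddCommGroup M] [Module (K ⊗[Z] R)ᵐᵒᵖ M],
      IsSimpleModule (K ⊗[Z] R)ᵐᵒᵖ M → ∀ x : M,
      (MulOpposite.op ((1 : K) ⊗ₜ[Z] (u * v - v * u))) • x = 0 := by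
    intro M _ _ hM x
    by_contra hne
    haveI := hM
    have htop := IsSimpleModule.span_singleton_eq_top (K ⊗[Z] R)ᵐᵒᵖ hne
    have hx : x ∈ Submodule.span (K ⊗[Z] R)ᵐᵒᵖ
        {(MulOpposite.op ((1 : K) ⊗ₜ[Z] (u * v - v * u))) • x} := by
      rw [htop]; trivial
    obtain ⟨s, hs⟩ := Submodule.mem_span_singleton.mp hx
    have h1 : (s * MulOpposite.op ((1 : K) ⊗ₜ[Z] (u * v - v * u))) • x = x := by
      rw [mul_smul]; exact hs
    have haux : (((1 : K) ⊗ₜ[Z] (u * v - v * u)) * s.unop)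
        * (((1 : K) ⊗ₜ[Z] (u * v - v * u)) * s.unop) = 0 := by
      calc (((1 : K) ⊗ₜ[Z] (u * v - v * u)) * s.unop)
            * (((1 : K) ⊗ₜ[Z] (u * v - v * u)) * s.unop)
          = (((1 : K) ⊗ₜ[Z] (u * v - v * u)) * s.unop * ((1 : K) ⊗ₜ[Z] (u * v - v * u)))
            * s.unop := by noncomm_ring
        _ = 0 := by rw [keyA s.unop, zero_mul]
    have h3 : (s * MulOpposite.op ((1 : K) ⊗ₜ[Z] (u * v - v * u)))
        * (s * MulOpposite.op ((1 : K) ⊗ₜ[Z] (u * v - v * u))) = 0 := by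
      calc (s * MulOpposite.op ((1 : K) ⊗ₜ[Z] (u * v - v * u)))
            * (s * MulOpposite.op ((1 : K) ⊗ₜ[Z] (u * v - v * u)))
          = MulOpposite.op ((((1 : K) ⊗ₜ[Z] (u * v - v * u)) * s.unop)
              * (((1 : K) ⊗ₜ[Z] (u * v - v * u)) * s.unop)) := by
            conv_lhs => rw [← MulOpposite.op_unop s]
            rw [← MulOpposite.op_mul, ← MulOpposite.op_mul]
        _ = 0 := by rw [haux, MulOpposite.op_zero]
    have h2 : x = 0 := by
      calc x = (s * MulOpposite.op ((1 : K) ⊗ₜ[Z] (u * v - v * u)))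
            • ((s * MulOpposite.op ((1 : K) ⊗ₜ[Z] (u * v - v * u))) • x) := by rw [h1, h1]
        _ = ((s * MulOpposite.op ((1 : K) ⊗ₜ[Z] (u * v - v * u)))
            * (s * MulOpposite.op ((1 : K) ⊗ₜ[Z] (u * v - v * u)))) • x := (mul_smul _ _ x).symm
        _ = 0 := by rw [h3, zero_smul]
    rw [h2, smul_zero] at hne
    exact hne rfl
  -- decomposition of an arbitrary element of S
  have hdecomp : ∀ s : (K ⊗[Z] R)ᵐᵒᵖ, ∃ c : Fin 4 → K,
      s = algebraMap K (K ⊗[Z] R)ᵐᵒᵖ (c 0)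
        + algebraMap K (K ⊗[Z] R)ᵐᵒᵖ (c 1) * MulOpposite.op ((1 : K) ⊗ₜ[Z] u)
        + algebraMap K (K ⊗[Z] R)ᵐᵒᵖ (c 2) * MulOpposite.op ((1 : K) ⊗ₜ[Z] v)
        + algebraMap K (K ⊗[Z] R)ᵐᵒᵖ (c 3)
            * MulOpposite.op ((1 : K) ⊗ₜ[Z] (u * v - v * u)) := by
    intro s
    refine ⟨fun i => (b.baseChange K).repr s.unop i, ?_⟩
    conv_lhs => rw [← MulOpposite.op_unop s, ← Module.Basis.sum_repr (b.baseChange K) s.unop]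
    rw [Fin.sum_univ_four, Module.Basis.baseChange_apply, Module.Basis.baseChange_apply,
      Module.Basis.baseChange_apply, Module.Basis.baseChange_apply, hb0, hb1, hb2, hb3]
    rw [MulOpposite.op_add, MulOpposite.op_add, MulOpposite.op_add, MulOpposite.op_smul,
      MulOpposite.op_smul, MulOpposite.op_smul, MulOpposite.op_smul,
      ← Algebra.TensorProduct.one_def, MulOpposite.op_one]
    rw [Algebra.smul_def, Algebra.smul_def, Algebra.smul_def, Algebra.smul_def, mul_one]
  -- element identities in S
  have hUU : MulOpposite.op ((1 : K) ⊗ₜ[Z] u) * MulOpposite.op ((1 : K) ⊗ₜ[Z] u)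
      = algebraMap K (K ⊗[Z] R)ᵐᵒᵖ (algebraMap Z K (s₀ * s₀ - 1)) := by
    rw [← MulOpposite.op_mul, ← one_tmul_mul, huu, tmul_algone, MulOpposite.op_smul,
      MulOpposite.op_one,
      Algebra.algebraMap_eq_smul_one (R := K) (A := (K ⊗[Z] R)ᵐᵒᵖ)]
  have hVV : MulOpposite.op ((1 : K) ⊗ₜ[Z] v) * MulOpposite.op ((1 : K) ⊗ₜ[Z] v)
      = algebraMap K (K ⊗[Z] R)ᵐᵒᵖ (algebraMap Z K (s₁ * s₁ - 1)) := by
    rw [← MulOpposite.op_mul, ← one_tmul_mul, hvv, tmul_algone, MulOpposite.op_smul,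
      MulOpposite.op_one,
      Algebra.algebraMap_eq_smul_one (R := K) (A := (K ⊗[Z] R)ᵐᵒᵖ)]
  have hΘU : MulOpposite.op ((1 : K) ⊗ₜ[Z] (u * v - v * u)) * MulOpposite.op ((1 : K) ⊗ₜ[Z] u)
      = algebraMap Z K (2 * (s₀ * s₀ - 1)) • MulOpposite.op ((1 : K) ⊗ₜ[Z] v)
        - algebraMap Z K (2 * (s₂ - s₀ * s₁)) • MulOpposite.op ((1 : K) ⊗ₜ[Z] u) := by
    rw [← MulOpposite.op_mul, ← one_tmul_mul, huθ, TensorProduct.tmul_sub, tmul_alg, tmul_alg,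
      MulOpposite.op_sub, MulOpposite.op_smul, MulOpposite.op_smul]
  have hΘV : MulOpposite.op ((1 : K) ⊗ₜ[Z] (u * v - v * u)) * MulOpposite.op ((1 : K) ⊗ₜ[Z] v)
      = algebraMap Z K (2 * (s₂ - s₀ * s₁)) • MulOpposite.op ((1 : K) ⊗ₜ[Z] v)
        - algebraMap Z K (2 * (s₁ * s₁ - 1)) • MulOpposite.op ((1 : K) ⊗ₜ[Z] u) := by
    rw [← MulOpposite.op_mul, ← one_tmul_mul, hvθ, TensorProduct.tmul_sub, tmul_alg, tmul_alg,
      MulOpposite.op_sub, MulOpposite.op_smul, MulOpposite.op_smul]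
  -- expansion of the action of an arbitrary element on a simple module
  have hexp : ∀ (M : Type) [AddCommGroup M] [Module (K ⊗[Z] R)ᵐᵒᵖ M],
      IsSimpleModule (K ⊗[Z] R)ᵐᵒᵖ M → ∀ (s : (K ⊗[Z] R)ᵐᵒᵖ) (c : Fin 4 → K),
      s = algebraMap K (K ⊗[Z] R)ᵐᵒᵖ (c 0)
        + algebraMap K (K ⊗[Z] R)ᵐᵒᵖ (c 1) * MulOpposite.op ((1 : K) ⊗ₜ[Z] u)
        + algebraMap K (K ⊗[Z] R)ᵐᵒᵖ (c 2) * MulOpposite.op ((1 : K) ⊗ₜ[Z] v)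
        + algebraMap K (K ⊗[Z] R)ᵐᵒᵖ (c 3)
            * MulOpposite.op ((1 : K) ⊗ₜ[Z] (u * v - v * u)) →
      ∀ x : M, s • x = algebraMap K (K ⊗[Z] R)ᵐᵒᵖ (c 0) • x
        + algebraMap K (K ⊗[Z] R)ᵐᵒᵖ (c 1) • (MulOpposite.op ((1 : K) ⊗ₜ[Z] u) • x)
        + algebraMap K (K ⊗[Z] R)ᵐᵒᵖ (c 2) • (MulOpposite.op ((1 : K) ⊗ₜ[Z] v) • x) := by
    intro M _ _ hM s c hc x
    rw [hc, add_smul, add_smul, add_smul, mul_smul, mul_smul, mul_smul, hΘkill M hM x,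
      smul_zero, add_zero]
  -- the operators U and V commute on a simple module
  have hUVcomm : ∀ (M : Type) [AddCommGroup M] [Module (K ⊗[Z] R)ᵐᵒᵖ M],
      IsSimpleModule (K ⊗[Z] R)ᵐᵒᵖ M → ∀ x : M,
      MulOpposite.op ((1 : K) ⊗ₜ[Z] u) • (MulOpposite.op ((1 : K) ⊗ₜ[Z] v) • x)
        = MulOpposite.op ((1 : K) ⊗ₜ[Z] v) • (MulOpposite.op ((1 : K) ⊗ₜ[Z] u) • x) := by
    intro M _ _ hM x
    have hsum : MulOpposite.op ((1 : K) ⊗ₜ[Z] (u * v))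
        = MulOpposite.op ((1 : K) ⊗ₜ[Z] (v * u))
          + MulOpposite.op ((1 : K) ⊗ₜ[Z] (u * v - v * u)) := by
      conv_lhs => rw [show u * v = v * u + (u * v - v * u) by noncomm_ring]
      rw [TensorProduct.tmul_add, MulOpposite.op_add]
    calc MulOpposite.op ((1 : K) ⊗ₜ[Z] u) • (MulOpposite.op ((1 : K) ⊗ₜ[Z] v) • x)
        = (MulOpposite.op ((1 : K) ⊗ₜ[Z] u) * MulOpposite.op ((1 : K) ⊗ₜ[Z] v)) • x :=
          (mul_smul _ _ x).symm
      _ = MulOpposite.op ((1 : K) ⊗ₜ[Z] (v * u)) • x := by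
          rw [← MulOpposite.op_mul, ← one_tmul_mul]
      _ = MulOpposite.op ((1 : K) ⊗ₜ[Z] (v * u)) • x
          + MulOpposite.op ((1 : K) ⊗ₜ[Z] (u * v - v * u)) • x := by
          rw [hΘkill M hM x, add_zero]
      _ = MulOpposite.op ((1 : K) ⊗ₜ[Z] (u * v)) • x := by rw [hsum, add_smul]
      _ = (MulOpposite.op ((1 : K) ⊗ₜ[Z] v) * MulOpposite.op ((1 : K) ⊗ₜ[Z] u)) • x := by
          rw [← MulOpposite.op_mul, ← one_tmul_mul]
      _ = MulOpposite.op ((1 : K) ⊗ₜ[Z] v) • (MulOpposite.op ((1 : K) ⊗ₜ[Z] u) • x) :=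
          mul_smul _ _ x
  -- scalars commute with everything in the module action
  have hcswap : ∀ (M : Type) [AddCommGroup M] [Module (K ⊗[Z] R)ᵐᵒᵖ M]
      (a : (K ⊗[Z] R)ᵐᵒᵖ) (k : K) (y : M),
      a • (algebraMap K (K ⊗[Z] R)ᵐᵒᵖ k • y) = algebraMap K (K ⊗[Z] R)ᵐᵒᵖ k • (a • y) := by
    intro M _ _ a k y
    rw [smul_smul, smul_smul, ← Algebra.commutes k a]
  have hcancM : ∀ (M : Type) [AddCommGroup M] [Module (K ⊗[Z] R)ᵐᵒᵖ M] (k : K) (x : M),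
      k ≠ 0 → algebraMap K (K ⊗[Z] R)ᵐᵒᵖ k • x = 0 → x = 0 := by
    intro M _ _ k x hk h0
    have h1 : algebraMap K (K ⊗[Z] R)ᵐᵒᵖ k⁻¹ • (algebraMap K (K ⊗[Z] R)ᵐᵒᵖ k • x)
        = (0 : M) := by rw [h0, smul_zero]
    rwa [smul_smul, ← map_mul, inv_mul_cancel₀ hk, map_one, one_smul] at h1
  -- Step 5 : the main case distinction
  have hmain : ∀ (M₁ M₂ M₃ : Type) [AddCommGroup M₁] [AddCommGroup M₂] [AddCommGroup M₃]
      [Module (K ⊗[Z] R)ᵐᵒᵖ M₁] [Module (K ⊗[Z] R)ᵐᵒᵖ M₂] [Module (K ⊗[Z] R)ᵐᵒᵖ M₃],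
      IsSimpleModule (K ⊗[Z] R)ᵐᵒᵖ M₁ → IsSimpleModule (K ⊗[Z] R)ᵐᵒᵖ M₂ →
      IsSimpleModule (K ⊗[Z] R)ᵐᵒᵖ M₃ →
      (Nonempty (M₁ ≃ₗ[(K ⊗[Z] R)ᵐᵒᵖ] M₂) ∨ Nonempty (M₁ ≃ₗ[(K ⊗[Z] R)ᵐᵒᵖ] M₃) ∨
        Nonempty (M₂ ≃ₗ[(K ⊗[Z] R)ᵐᵒᵖ] M₃)) := by
    intro M₁ M₂ M₃ _ _ _ _ _ _ h1 h2 h3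
    by_cases haK : algebraMap Z K (s₀ * s₀ - 1) = 0
    · -- the image of a is zero; then the image of m is zero and U acts as zero
      have hmK : algebraMap Z K (s₂ - s₀ * s₁) = 0 := by
        have h := hm2K
        rw [haK, zero_mul] at h
        exact mul_self_eq_zero.mp h
      have hU0 : ∀ (M : Type) [AddCommGroup M] [Module (K ⊗[Z] R)ᵐᵒᵖ M],
          IsSimpleModule (K ⊗[Z] R)ᵐᵒᵖ M → ∀ x : M,
          MulOpposite.op ((1 : K) ⊗ₜ[Z] u) • x = 0 := by
        intro M _ _ hM
        by_cases hbK : algebraMap Z K (s₁ * s₁ - 1) = 0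
        · -- nilpotent argument
          have hUcomm : ∀ (s : (K ⊗[Z] R)ᵐᵒᵖ) (x : M),
              MulOpposite.op ((1 : K) ⊗ₜ[Z] u) • (s • x)
                = s • (MulOpposite.op ((1 : K) ⊗ₜ[Z] u) • x) := by
            intro s x
            obtain ⟨c, hc⟩ := hdecomp s
            rw [hexp M hM s c hc x, hexp M hM s c hc (MulOpposite.op ((1 : K) ⊗ₜ[Z] u) • x)]
            rw [smul_add, smul_add, hcswap, hcswap, hcswap, hUVcomm M hM]
          have hUU0 : MulOpposite.op ((1 : K) ⊗ₜ[Z] u) * MulOpposite.op ((1 : K) ⊗ₜ[Z] u)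
              = 0 := by rw [hUU, haK, map_zero]
          let W : Submodule (K ⊗[Z] R)ᵐᵒᵖ M :=
            { carrier := {y | MulOpposite.op ((1 : K) ⊗ₜ[Z] u) • y = 0}
              add_mem' := by
                intro y1 y2 hy1 hy2
                simp only [Set.mem_setOf_eq] at *
                rw [smul_add, hy1, hy2, add_zero]
              zero_mem' := by simp
              smul_mem' := by
                intro s y hy
                simp only [Set.mem_setOf_eq] at *
                rw [hUcomm, hy, smul_zero] }
          have hWim : ∀ x : M, MulOpposite.op ((1 : K) ⊗ₜ[Z] u) • x ∈ W := by
            intro x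
            show MulOpposite.op ((1 : K) ⊗ₜ[Z] u)
              • (MulOpposite.op ((1 : K) ⊗ₜ[Z] u) • x) = 0
            rw [smul_smul, hUU0, zero_smul]
          rcases eq_bot_or_eq_top W with hW | hW
          · intro x
            have hx := hWim x
            rw [hW, Submodule.mem_bot] at hx
            exact hx
          · intro x
            have hx : x ∈ W := by rw [hW]; trivial
            exact hx
        · -- the image of b is nonzero : use the relation for Θ * V
          intro x
          have h0 : (MulOpposite.op ((1 : K) ⊗ₜ[Z] (u * v - v * u))
              * MulOpposite.op ((1 : K) ⊗ₜ[Z] v)) • x = 0 := by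
            rw [mul_smul, hΘkill M hM]
          rw [hΘV, sub_smul, Algebra.smul_def, Algebra.smul_def, mul_smul, mul_smul] at h0
          have e1 : algebraMap Z K (2 * (s₂ - s₀ * s₁)) = 0 := by
            rw [map_mul, hmK, mul_zero]
          have e2 : algebraMap Z K (2 * (s₁ * s₁ - 1))
              = 2 * algebraMap Z K (s₁ * s₁ - 1) := by rw [map_mul, map_ofNat]
          rw [e1, e2, map_zero, zero_smul, zero_sub, neg_eq_zero] at h0
          exact hcancM M _ _ (mul_ne_zero h2K hbK) h0
      have hact : ∀ s : (K ⊗[Z] R)ᵐᵒᵖ, ∃ c d : K,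
          ∀ (M : Type) [AddCommGroup M] [Module (K ⊗[Z] R)ᵐᵒᵖ M],
          IsSimpleModule (K ⊗[Z] R)ᵐᵒᵖ M → ∀ x : M,
          s • x = algebraMap K (K ⊗[Z] R)ᵐᵒᵖ c • x
            + algebraMap K (K ⊗[Z] R)ᵐᵒᵖ d • (MulOpposite.op ((1 : K) ⊗ₜ[Z] v) • x) := by
        intro s
        obtain ⟨c, hc⟩ := hdecomp s
        refine ⟨c 0, c 2, ?_⟩
        intro M _ _ hM x
        rw [hexp M hM s c hc x, hU0 M hM x, smul_zero, add_zero]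
      exact stmt18_two_of_three (algebraMap K (K ⊗[Z] R)ᵐᵒᵖ)
        (fun k s => Algebra.commutes k s)
        (fun k hk => (isUnit_iff_ne_zero.mpr hk).map (algebraMap K (K ⊗[Z] R)ᵐᵒᵖ))
        (MulOpposite.op ((1 : K) ⊗ₜ[Z] v)) (algebraMap Z K (s₁ * s₁ - 1)) hVV hact
        M₁ M₂ M₃ h1 h2 h3
    · -- the image of a is nonzero : V acts as a multiple of U
      have hVU : ∀ (M : Type) [AddCommGroup M] [Module (K ⊗[Z] R)ᵐᵒᵖ M],
          IsSimpleModule (K ⊗[Z] R)ᵐᵒᵖ M → ∀ x : M,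
          MulOpposite.op ((1 : K) ⊗ₜ[Z] v) • x
            = algebraMap K (K ⊗[Z] R)ᵐᵒᵖ ((2 * algebraMap Z K (s₀ * s₀ - 1))⁻¹
                * (2 * algebraMap Z K (s₂ - s₀ * s₁)))
              • (MulOpposite.op ((1 : K) ⊗ₜ[Z] u) • x) := by
        intro M _ _ hM x
        have h0 : (MulOpposite.op ((1 : K) ⊗ₜ[Z] (u * v - v * u))
            * MulOpposite.op ((1 : K) ⊗ₜ[Z] u)) • x = 0 := by
          rw [mul_smul, hΘkill M hM]
        rw [hΘU, sub_smul, Algebra.smul_def, Algebra.smul_def, mul_smul, mul_smul] at h0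
        have e1 : algebraMap Z K (2 * (s₀ * s₀ - 1))
            = 2 * algebraMap Z K (s₀ * s₀ - 1) := by rw [map_mul, map_ofNat]
        have e2 : algebraMap Z K (2 * (s₂ - s₀ * s₁))
            = 2 * algebraMap Z K (s₂ - s₀ * s₁) := by rw [map_mul, map_ofNat]
        rw [e1, e2, sub_eq_zero] at h0
        have hne : (2 * algebraMap Z K (s₀ * s₀ - 1)) ≠ 0 := mul_ne_zero h2K haK
        calc MulOpposite.op ((1 : K) ⊗ₜ[Z] v) • x
            = algebraMap K (K ⊗[Z] R)ᵐᵒᵖ ((2 * algebraMap Z K (s₀ * s₀ - 1))⁻¹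
                * (2 * algebraMap Z K (s₀ * s₀ - 1)))
              • (MulOpposite.op ((1 : K) ⊗ₜ[Z] v) • x) := by
              rw [inv_mul_cancel₀ hne, map_one, one_smul]
          _ = algebraMap K (K ⊗[Z] R)ᵐᵒᵖ ((2 * algebraMap Z K (s₀ * s₀ - 1))⁻¹)
              • (algebraMap K (K ⊗[Z] R)ᵐᵒᵖ (2 * algebraMap Z K (s₀ * s₀ - 1))
                • (MulOpposite.op ((1 : K) ⊗ₜ[Z] v) • x)) := by rw [map_mul, mul_smul]
          _ = algebraMap K (K ⊗[Z] R)ᵐᵒᵖ ((2 * algebraMap Z K (s₀ * s₀ - 1))⁻¹)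
              • (algebraMap K (K ⊗[Z] R)ᵐᵒᵖ (2 * algebraMap Z K (s₂ - s₀ * s₁))
                • (MulOpposite.op ((1 : K) ⊗ₜ[Z] u) • x)) := by rw [h0]
          _ = algebraMap K (K ⊗[Z] R)ᵐᵒᵖ ((2 * algebraMap Z K (s₀ * s₀ - 1))⁻¹
                * (2 * algebraMap Z K (s₂ - s₀ * s₁)))
              • (MulOpposite.op ((1 : K) ⊗ₜ[Z] u) • x) := by rw [smul_smul, ← map_mul]
      have hact : ∀ s : (K ⊗[Z] R)ᵐᵒᵖ, ∃ c d : K,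
          ∀ (M : Type) [AddCommGroup M] [Module (K ⊗[Z] R)ᵐᵒᵖ M],
          IsSimpleModule (K ⊗[Z] R)ᵐᵒᵖ M → ∀ x : M,
          s • x = algebraMap K (K ⊗[Z] R)ᵐᵒᵖ c • x
            + algebraMap K (K ⊗[Z] R)ᵐᵒᵖ d • (MulOpposite.op ((1 : K) ⊗ₜ[Z] u) • x) := by
        intro s
        obtain ⟨c, hc⟩ := hdecomp s
        refine ⟨c 0, c 1 + c 2 * ((2 * algebraMap Z K (s₀ * s₀ - 1))⁻¹
          * (2 * algebraMap Z K (s₂ - s₀ * s₁))), ?_⟩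
        intro M _ _ hM x
        rw [hexp M hM s c hc x, hVU M hM x]
        rw [smul_smul (algebraMap K (K ⊗[Z] R)ᵐᵒᵖ (c 2))
          (algebraMap K (K ⊗[Z] R)ᵐᵒᵖ ((2 * algebraMap Z K (s₀ * s₀ - 1))⁻¹
            * (2 * algebraMap Z K (s₂ - s₀ * s₁))))
          (MulOpposite.op ((1 : K) ⊗ₜ[Z] u) • x), ← map_mul, map_add, add_smul, add_assoc]
      exact stmt18_two_of_three (algebraMap K (K ⊗[Z] R)ᵐᵒᵖ)
        (fun k s => Algebra.commutes k s)
        (fun k hk => (isUnit_iff_ne_zero.mpr hk).map (algebraMap K (K ⊗[Z] R)ᵐᵒᵖ))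
        (MulOpposite.op ((1 : K) ⊗ₜ[Z] u)) (algebraMap Z K (s₀ * s₀ - 1)) hUU hact
        M₁ M₂ M₃ h1 h2 h3
  exact ⟨hmain, hΘkill⟩

/-- Let `Z = O[[t₁,t₂,t₃]]` be the centre of the algebra `R` (the pro-`p`
Cayley–Hamilton algebra on two generators over `O[[t₁,t₂,t₃]]`, `p > 2`, modelled as in
Statement 13 together with the hypothesis that `R` is free over `Z` with basis
`1, u, v, uv - vu`), and let `n` be a maximal ideal of `Z[1/p]` such that the image of
`(uv-vu)^*(uv-vu) = -(uv-vu)²` in `K := Z[1/p]/n` is zero (`*` being the involution induced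
by `g ↦ g⁻¹`).  Then the quotient `R[1/p]/nR[1/p] = K ⊗_Z R` has at most `2` non-isomorphic
irreducible right modules, and each irreducible right module is annihilated by the image `θ`
of `uv - vu`. -/
theorem stmt18 (p : ℕ) [Fact p.Prime] (hp2 : 2 < p)
    {O : Type} [CommRing O] [IsDomain O] [IsDiscreteValuationRing O]
    [IsAdicComplete (IsLocalRing.maximalIdeal O) O]
    [CharP (IsLocalRing.ResidueField O) p]
    {R : Type} [Ring R] [Invertible (2 : R)] [TopologicalSpace R] [IsTopologicalRing R]
    [Algebra (MvPowerSeries (Fin 3) O) R]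
    (hcent : ∀ (a : MvPowerSeries (Fin 3) O) (x : R),
      algebraMap (MvPowerSeries (Fin 3) O) R a * x = x * algebraMap (MvPowerSeries (Fin 3) O) R a)
    (t : Fin 3 → R)
    (ht : ∀ i, t i = algebraMap (MvPowerSeries (Fin 3) O) R (MvPowerSeries.X i))
    (γ δ : Rˣ)
    (hγ : (γ : R) ^ 2 - 2 * (1 + t 0) * γ + 1 = 0)
    (hδ : (δ : R) ^ 2 - 2 * (1 + t 1) * δ + 1 = 0)
    (hγδ : ((γ : R) * δ) ^ 2 - 2 * (1 + t 2) * ((γ : R) * δ) + 1 = 0)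
    (hδγ : ((δ : R) * γ) ^ 2 - 2 * (1 + t 2) * ((δ : R) * γ) + 1 = 0)
    (u v : R)
    (hu : u = ⅟(2 : R) * ((γ : R) - (γ⁻¹ : Rˣ)))
    (hv : v = ⅟(2 : R) * ((δ : R) - (δ⁻¹ : Rˣ)))
    (hbasis : ∃ b : Module.Basis (Fin 4) (MvPowerSeries (Fin 3) O) R,
      b 0 = 1 ∧ b 1 = u ∧ b 2 = v ∧ b 3 = u * v - v * u)
    (n : Ideal (Localization.Away ((p : MvPowerSeries (Fin 3) O)))) (hn : n.IsMaximal)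
    -- `K = Z[1/p]/n`, presented as the codomain of a surjection with kernel `n`.
    (K : Type) [Field K] [Algebra (MvPowerSeries (Fin 3) O) K]
    (q : Localization.Away ((p : MvPowerSeries (Fin 3) O)) →+* K)
    (hq : Function.Surjective q) (hker : RingHom.ker q = n)
    (hcomp : q.comp (algebraMap (MvPowerSeries (Fin 3) O)
        (Localization.Away ((p : MvPowerSeries (Fin 3) O)))) =
      algebraMap (MvPowerSeries (Fin 3) O) K)
    -- the image of `(uv-vu)^*(uv-vu) = -(uv-vu)²` in `K` is zero:
    (z : MvPowerSeries (Fin 3) O)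
    (hz : algebraMap (MvPowerSeries (Fin 3) O) R z = -((u * v - v * u) ^ 2))
    (hzn : algebraMap (MvPowerSeries (Fin 3) O) K z = 0) :
    (∀ (M₁ M₂ M₃ : Type) [AddCommGroup M₁] [AddCommGroup M₂] [AddCommGroup M₃]
      [Module (K ⊗[MvPowerSeries (Fin 3) O] R)ᵐᵒᵖ M₁]
      [Module (K ⊗[MvPowerSeries (Fin 3) O] R)ᵐᵒᵖ M₂]
      [Module (K ⊗[MvPowerSeries (Fin 3) O] R)ᵐᵒᵖ M₃],
      IsSimpleModule (K ⊗[MvPowerSeries (Fin 3) O] R)ᵐᵒᵖ M₁ →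
      IsSimpleModule (K ⊗[MvPowerSeries (Fin 3) O] R)ᵐᵒᵖ M₂ →
      IsSimpleModule (K ⊗[MvPowerSeries (Fin 3) O] R)ᵐᵒᵖ M₃ →
      (Nonempty (M₁ ≃ₗ[(K ⊗[MvPowerSeries (Fin 3) O] R)ᵐᵒᵖ] M₂) ∨
        Nonempty (M₁ ≃ₗ[(K ⊗[MvPowerSeries (Fin 3) O] R)ᵐᵒᵖ] M₃) ∨
        Nonempty (M₂ ≃ₗ[(K ⊗[MvPowerSeries (Fin 3) O] R)ᵐᵒᵖ] M₃))) ∧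
    (∀ (M : Type) [AddCommGroup M] [Module (K ⊗[MvPowerSeries (Fin 3) O] R)ᵐᵒᵖ M],
      IsSimpleModule (K ⊗[MvPowerSeries (Fin 3) O] R)ᵐᵒᵖ M →
      ∀ m : M, (MulOpposite.op
        ((1 : K) ⊗ₜ[MvPowerSeries (Fin 3) O] (u * v - v * u))) • m = 0) := by
  classical
  obtain ⟨b, hb0, hb1, hb2, hb3⟩ := hbasis
  -- `2` is invertible in `K`
  have h2O : IsUnit (2 : O) := by
    by_contra h2O
    have hmem : (2 : O) ∈ IsLocalRing.maximalIdeal O := by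
      rw [IsLocalRing.mem_maximalIdeal, mem_nonunits_iff]
      exact h2O
    have hres : (IsLocalRing.residue O) 2 = 0 := Ideal.Quotient.eq_zero_iff_mem.mpr hmem
    rw [map_ofNat] at hres
    have h2cast : ((2 : ℕ) : IsLocalRing.ResidueField O) = 0 := by
      rw [Nat.cast_ofNat]; exact hres
    have hdvd : p ∣ 2 := (CharP.cast_eq_zero_iff (IsLocalRing.ResidueField O) p 2).mp h2cast
    have := Nat.le_of_dvd (by norm_num) hdvd
    omega
  have h2Z : IsUnit (2 : MvPowerSeries (Fin 3) O) := by
    have h := h2O.map (MvPowerSeries.C (σ := Fin 3) (R := O))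
    rwa [map_ofNat] at h
  have h2K : (2 : K) ≠ 0 := by
    have h := h2Z.map (algebraMap (MvPowerSeries (Fin 3) O) K)
    rw [map_ofNat] at h
    exact h.ne_zero
  -- convert the quadratic relations
  have e0 : (1 : R) + t 0 = algebraMap (MvPowerSeries (Fin 3) O) R (1 + MvPowerSeries.X 0) := by
    rw [map_add, map_one, ht 0]
  have e1 : (1 : R) + t 1 = algebraMap (MvPowerSeries (Fin 3) O) R (1 + MvPowerSeries.X 1) := by
    rw [map_add, map_one, ht 1]
  have e2 : (1 : R) + t 2 = algebraMap (MvPowerSeries (Fin 3) O) R (1 + MvPowerSeries.X 2) := by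
    rw [map_add, map_one, ht 2]
  rw [e0] at hγ
  rw [e1] at hδ
  rw [e2] at hγδ
  exact stmt18_aux hcent γ δ (1 + MvPowerSeries.X 0) (1 + MvPowerSeries.X 1)
    (1 + MvPowerSeries.X 2) hγ hδ hγδ u v hu hv h2K b hb0 hb1 hb2 hb3 z hz hzn
end
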